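/- arXiv:0909.3528 — 5 statements merged into one kernel-verified Lean document; each statement's English description precedes it below -/
import Mathlib

section
/- For any countable tree T, the boundary ∂T equipped with the shadow topology is a Baire space. -/
open Filter Set

section PowersDefs

/-- A Powers group: for every finite `F ⊆ Γ \ {1}` and every `N ≥ 1` there is a partition
`Γ = C ⊔ D` (here `D = Cᶜ`) and elements `g 1, …, g N` with `fC ∩ C = ∅` for `f ∈ F` and
`g j D ∩ g k D = ∅` for `j ≠ k`. -/
def IsPowersGroup (Γ : Type*) [Group Γ] : Prop :=
  Nontrivial Γ ∧
    ∀ F : Finset Γ, (1 : Γ) ∉ F → ∀ N : ℕ, 1 ≤ N →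
      ∃ (C : Set Γ) (g : Fin N → Γ),
        (∀ f ∈ F, (fun x => f * x) '' C ∩ C = ∅) ∧
        ∀ j k : Fin N, j ≠ k →
          (fun x => g j * x) '' Cᶜ ∩ (fun x => g k * x) '' Cᶜ = ∅

/-- A subgroup is subnormal if there is a finite chain of successively normal subgroups
reaching the whole group. -/
def IsSubnormalIn {Γ : Type*} [Group Γ] (N : Subgroup Γ) : Prop :=
  ∃ (k : ℕ) (c : ℕ → Subgroup Γ), c 0 = N ∧ c k = ⊤ ∧
    ∀ i < k, c i ≤ c (i + 1) ∧ ∀ x ∈ c (i + 1), ∀ y ∈ c i, x * y * x⁻¹ ∈ c i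

/-- A strongly Powers group: every nontrivial subnormal subgroup is a Powers group. -/
def IsStronglyPowersGroup (Γ : Type*) [Group Γ] : Prop :=
  ∀ N : Subgroup Γ, IsSubnormalIn N → N ≠ ⊥ → IsPowersGroup N

end PowersDefs

section TreeDefs

variable {V : Type*}

/-- A ray in a graph: a sequence of vertices with `d(x m, x n) = |m - n|`. -/
def IsRay (G : SimpleGraph V) (x : ℕ → V) : Prop :=
  ∀ m n : ℕ, G.dist (x m) (x n) = ((m : ℤ) - (n : ℤ)).natAbs

/-- Two rays are cofinal if up to an index shift they eventually coincide. -/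
def Cofinal (x y : ℕ → V) : Prop :=
  ∃ a b : ℕ, ∀ᶠ n in atTop, y (n + a) = x (n + b)

/-- The type of rays of a graph. -/
def Ray (G : SimpleGraph V) : Type _ := {x : ℕ → V // IsRay G x}

/-- The boundary of a tree: cofinality classes of rays. -/
def Boundary (G : SimpleGraph V) : Type _ :=
  Quot (fun r s : Ray G => Cofinal r.1 s.1)

/-- The boundary point represented by a ray. -/
def Boundary.mk (G : SimpleGraph V) (r : Ray G) : Boundary G := Quot.mk _ r

/-- The shadow of the oriented edge `(u, v)`: boundary points represented by rays that are
eventually strictly closer to `v` than to `u`. -/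
def Shadow (G : SimpleGraph V) (u v : V) : Set (Boundary G) :=
  {ξ | ∃ r : Ray G, Boundary.mk G r = ξ ∧
    ∀ᶠ n in atTop, G.dist v (r.1 n) < G.dist u (r.1 n)}

/-- The shadow topology on the boundary of a tree. -/
instance (G : SimpleGraph V) : TopologicalSpace (Boundary G) :=
  TopologicalSpace.generateFrom {s | ∃ u v : V, G.Adj u v ∧ s = Shadow G u v}

/-- The action of `Γ` on the vertices is by graph automorphisms. -/
def IsGraphAction (G : SimpleGraph V) (Γ : Type*) [Group Γ] [MulAction Γ V] : Prop :=
  ∀ (γ : Γ) (u v : V), G.Adj u v ↔ G.Adj (γ • u) (γ • v)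

variable {Γ : Type*} [Group Γ] [MulAction Γ V]

theorem dist_smul_eq {G : SimpleGraph V} (h : IsGraphAction G Γ) (γ : Γ) (u v : V) :
    G.dist (γ • u) (γ • v) = G.dist u v := by
  have key : ∀ (g : Γ) (a b : V), G.dist (g • a) (g • b) ≤ G.dist a b := by
    intro g a b
    by_cases hr : G.Reachable a b
    · obtain ⟨w, hw⟩ := hr.exists_walk_length_eq_dist
      have hle : G.dist (g • a) (g • b) ≤
          (w.map ⟨fun x => g • x, fun hx => (h g _ _).mp hx⟩).length :=
        SimpleGraph.dist_le _
      rwa [SimpleGraph.Walk.length_map, hw] at hle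
    · have hr2 : ¬ G.Reachable (g • a) (g • b) := by
        intro hc
        refine hr ?_
        have h' := hc.map (⟨fun x => g⁻¹ • x, fun hx => (h g⁻¹ _ _).mp hx⟩ : G →g G)
        have h'' : G.Reachable (g⁻¹ • (g • a)) (g⁻¹ • (g • b)) := h'
        simpa using h''
      rw [SimpleGraph.dist_eq_zero_of_not_reachable hr,
        SimpleGraph.dist_eq_zero_of_not_reachable hr2]
  refine le_antisymm (key γ u v) ?_
  have h2 := key γ⁻¹ (γ • u) (γ • v)
  simpa using h2

/-- The image of a ray under an automorphism. -/
def raySmul {G : SimpleGraph V} (h : IsGraphAction G Γ) (γ : Γ) (r : Ray G) : Ray G :=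
  ⟨fun n => γ • r.1 n, fun m n => by rw [dist_smul_eq h]; exact r.2 m n⟩

/-- The induced action of an automorphism on the boundary. -/
def Boundary.smul {G : SimpleGraph V} (h : IsGraphAction G Γ) (γ : Γ) :
    Boundary G → Boundary G :=
  Quot.map (raySmul h γ) (by
    rintro r s ⟨a, b, hab⟩
    exact ⟨a, b, hab.mono fun n hn => by simp only [raySmul, hn]⟩)

/-- The fixed-point set of `γ` on the boundary. -/
def FixedBoundary {G : SimpleGraph V} (h : IsGraphAction G Γ) (γ : Γ) :
    Set (Boundary G) :=
  {ξ | Boundary.smul h γ ξ = ξ}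

/-- A slender action: every nontrivial element has a fixed-point set with empty interior in
the boundary. -/
def SlenderAction {G : SimpleGraph V} (h : IsGraphAction G Γ) : Prop :=
  ∀ γ : Γ, γ ≠ 1 → interior (FixedBoundary h γ) = ∅

/-- A minimal action on a tree: no nonempty proper invariant subtree. -/
def MinimalTreeAction (G : SimpleGraph V) (Γ : Type*) [Group Γ] [MulAction Γ V] : Prop :=
  ∀ S : Set V, S.Nonempty → (∀ (γ : Γ), ∀ v ∈ S, γ • v ∈ S) →
    (G.induce S).Connected → S = Set.univ

/-- An inversion of a graph. -/
def IsInversionAut (G : SimpleGraph V) (γ : Γ) : Prop :=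
  ∃ u v : V, G.Adj u v ∧ γ • u = v ∧ γ • v = u

/-- An elliptic automorphism: one fixing a vertex. -/
def IsEllipticAut (V : Type*) [MulAction Γ V] (γ : Γ) : Prop := ∃ v : V, γ • v = v

/-- A hyperbolic automorphism: neither elliptic nor an inversion. -/
def IsHyperbolicAut (G : SimpleGraph V) (γ : Γ) : Prop :=
  ¬ IsEllipticAut V γ ∧ ¬ IsInversionAut G γ

/-- The axis of an automorphism: the set of vertices minimizing the displacement
`d(x, γ x)`. -/
def Axis (G : SimpleGraph V) (γ : Γ) : Set V :=
  {x : V | ∀ y : V, G.dist x (γ • x) ≤ G.dist y (γ • y)}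

/-- Two automorphisms are transverse if the intersection of their axes is finite. -/
def Transverse (G : SimpleGraph V) (γ δ : Γ) : Prop :=
  (Axis G γ ∩ Axis G δ).Finite

/-- A strongly hyperbolic action on a tree: it admits a pair of transverse hyperbolic
elements. -/
def StronglyHyperbolicTreeAction (G : SimpleGraph V) (Γ : Type*) [Group Γ] [MulAction Γ V] :
    Prop :=
  ∃ γ δ : Γ, IsHyperbolicAut G γ ∧ IsHyperbolicAut G δ ∧ Transverse G γ δ

/-- A pending ray: a ray whose vertices eventually all have degree two. -/
def IsPendingRay (G : SimpleGraph V) (x : ℕ → V) : Prop :=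
  IsRay G x ∧ ∀ᶠ n in atTop, (G.neighborSet (x n)).ncard = 2

/-- A linear tree: its vertex set is an enumeration `(x n), n ∈ ℤ` with
`d(x m, x n) = |m - n|`. -/
def IsLinearTree (G : SimpleGraph V) : Prop :=
  ∃ x : ℤ → V, Function.Surjective x ∧
    ∀ m n : ℤ, G.dist (x m) (x n) = (m - n).natAbs

end TreeDefs

/-!
Every edge `(u, v)` of a tree is a bridge, so a walk from outside the half-tree of vertices closer
to `v` than to `u` into that half-tree passes through `v`: distances are additive across the edge.
Hence the shadows of the edges `(r n, r (n + 1))` of a ray `r` form a neighbourhood basis of its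
end, and a dense open set meets any nonempty shadow in a smaller shadow whose half-tree is nested in
the first and excludes its head. As in Baire's theorem for complete metric spaces, iterating
against countably many dense open sets yields nested half-trees; their heads lie in order on a
geodesic, which extends to a ray whose end lies in every chosen shadow.
-/

namespace SimpleGraph

variable {V : Type*} {G : SimpleGraph V}

namespace Walk

theorem dist_getVert_le {u v : V} (p : G.Walk u v) {i j : ℕ} (hij : i ≤ j) :
    G.dist (p.getVert i) (p.getVert j) ≤ j - i := by
  have h := dist_le ((p.drop i).take (j - i))
  rw [take_length, drop_getVert, Nat.add_sub_cancel' hij] at h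
  exact h.trans (min_le_left _ _)

theorem dist_add_dist_le_length {u v w : V} {p : G.Walk u v} (hw : w ∈ p.support) :
    G.dist u w + G.dist w v ≤ p.length := by
  obtain ⟨i, rfl, hi⟩ := mem_support_iff_exists_getVert.1 hw
  have h₁ := p.dist_getVert_le (Nat.zero_le i)
  have h₂ := p.dist_getVert_le hi
  rw [getVert_zero] at h₁
  rw [getVert_length] at h₂
  omega

theorem dist_getVert_of_length_eq_dist (hG : G.Connected) {u v : V} {p : G.Walk u v}
    (hp : p.length = G.dist u v) {i : ℕ} (hi : i ≤ p.length) : G.dist u (p.getVert i) = i := by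
  have h₁ := p.dist_getVert_le (Nat.zero_le i)
  have h₂ := p.dist_getVert_le hi
  have h₃ := hG.dist_triangle (u := u) (v := p.getVert i) (w := v)
  rw [getVert_zero] at h₁
  rw [getVert_length] at h₂
  omega

def seqConcat {b : ℕ → V} (w : ∀ k, G.Walk (b k) (b (k + 1))) : ∀ k, G.Walk (b 0) (b k)
  | 0 => nil
  | k + 1 => (seqConcat w k).append (w k)

theorem monotone_length_seqConcat {b : ℕ → V} (w : ∀ k, G.Walk (b k) (b (k + 1))) :
    Monotone fun k => (seqConcat w k).length :=
  monotone_nat_of_le_succ fun k => by simp [seqConcat]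

theorem getVert_seqConcat_add {b : ℕ → V} (w : ∀ k, G.Walk (b k) (b (k + 1))) {n k : ℕ}
    (hn : n ≤ (seqConcat w k).length) (j : ℕ) :
    (seqConcat w (k + j)).getVert n = (seqConcat w k).getVert n := by
  induction j with
  | zero => rfl
  | succ j ih =>
    rw [← add_assoc, seqConcat, getVert_append',
      if_pos (hn.trans (monotone_length_seqConcat w (k.le_add_right j))), ih]

end Walk

def halfTree (G : SimpleGraph V) (u v : V) : Set V := {z | G.dist v z < G.dist u z}

variable {u v w x y z : V}

theorem Adj.mem_halfTree (h : G.Adj u v) : v ∈ G.halfTree u v := by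
  simp [halfTree, dist_eq_one_iff_adj.2 h]

/-- Close `p` up with geodesics `u ⟶ w` and `z ⟶ v`: the bridge `uv` is on none of them. -/
theorem IsTree.mem_support_of_notMem_halfTree (hT : G.IsTree) (huv : G.Adj u v)
    (hw : w ∉ G.halfTree u v) (hz : z ∈ G.halfTree u v) (p : G.Walk w z) : v ∈ p.support := by
  obtain ⟨q, hq⟩ := hT.connected.exists_walk_length_eq_dist u w
  obtain ⟨r, hr⟩ := hT.connected.exists_walk_length_eq_dist z v
  have hbridge := isBridge_iff_forall_walk_mem_edges.1
    (isAcyclic_iff_forall_adj_isBridge.1 hT.isAcyclic huv) ((q.append p).append r)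
  simp only [halfTree, Set.mem_ofPred_eq, not_lt] at hw hz
  simp only [Walk.edges_append, List.mem_append] at hbridge
  rcases hbridge with (h | h) | h
  · have := Walk.dist_add_dist_le_length (q.snd_mem_support_of_mem_edges h)
    rw [dist_eq_one_iff_adj.2 huv] at this
    omega
  · exact p.snd_mem_support_of_mem_edges h
  · have := Walk.dist_add_dist_le_length (r.fst_mem_support_of_mem_edges h)
    rw [dist_eq_one_iff_adj.2 huv, hr, dist_comm (u := z), dist_comm (u := z)] at this
    omega

theorem IsTree.dist_eq_dist_add_dist_of_notMem_halfTree (hT : G.IsTree) (huv : G.Adj u v)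
    (hw : w ∉ G.halfTree u v) (hz : z ∈ G.halfTree u v) :
    G.dist w z = G.dist w v + G.dist v z := by
  obtain ⟨p, hp⟩ := hT.connected.exists_walk_length_eq_dist w z
  have := Walk.dist_add_dist_le_length (hT.mem_support_of_notMem_halfTree huv hw hz p)
  have := hT.connected.dist_triangle (u := w) (v := v) (w := z)
  omega

theorem IsTree.halfTree_subset_halfTree (hT : G.IsTree) (hxy : G.Adj x y)
    (hu : u ∉ G.halfTree x y) (hv : v ∉ G.halfTree x y) (hy : y ∈ G.halfTree u v) :
    G.halfTree x y ⊆ G.halfTree u v := by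
  intro z hz
  have hvz := hT.dist_eq_dist_add_dist_of_notMem_halfTree hxy hv hz
  have huz := hT.dist_eq_dist_add_dist_of_notMem_halfTree hxy hu hz
  simp only [halfTree, Set.mem_ofPred_eq] at hy ⊢
  omega

end SimpleGraph

open SimpleGraph

section Rays

variable {V : Type*} {G : SimpleGraph V} {x : ℕ → V} {u v : V}

theorem IsRay.dist_of_le (hx : IsRay G x) {m n : ℕ} (h : m ≤ n) :
    G.dist (x m) (x n) = n - m := by
  have := hx m n
  omega

theorem IsRay.adj (hx : IsRay G x) (n : ℕ) : G.Adj (x n) (x (n + 1)) :=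
  dist_eq_one_iff_adj.1 (by rw [hx.dist_of_le n.le_succ]; omega)

theorem IsRay.mem_halfTree (hx : IsRay G x) {m n : ℕ} (h : m < n) :
    x n ∈ G.halfTree (x m) (x (m + 1)) := by
  simp only [halfTree, Set.mem_ofPred_eq, hx.dist_of_le h.le, hx.dist_of_le h]
  omega

theorem IsRay.notMem_halfTree (hx : IsRay G x) {m n : ℕ} (h : n ≤ m) :
    x n ∉ G.halfTree (x m) (x (m + 1)) := by
  simp only [halfTree, Set.mem_ofPred_eq, dist_comm (v := x n), hx.dist_of_le h,
    hx.dist_of_le (h.trans m.le_succ)]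
  omega

theorem IsRay.antitone_halfTree (hx : IsRay G x) (hT : G.IsTree) :
    Antitone fun n => G.halfTree (x n) (x (n + 1)) :=
  antitone_nat_of_succ_le fun n =>
    hT.halfTree_subset_halfTree (hx.adj _) (hx.notMem_halfTree n.le_succ)
      (hx.notMem_halfTree le_rfl) (hx.mem_halfTree (by omega))

/-- The distance to `w` cannot decrease forever, and once it increases, `w` stays behind all later
edges. -/
theorem IsRay.eventually_notMem_halfTree (hx : IsRay G x) (hT : G.IsTree) (w : V) :
    ∀ᶠ n in atTop, w ∉ G.halfTree (x n) (x (n + 1)) := by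
  obtain ⟨N, hN⟩ := WellFounded.not_rel_apply_succ (r := (· < ·)) fun n => G.dist (x n) w
  refine eventually_atTop.2 ⟨N, fun n hn hw => hN ?_⟩
  have := hx.antitone_halfTree hT hn hw
  simpa only [halfTree, Set.mem_ofPred_eq] using this

theorem IsRay.eventually_halfTree_subset (hx : IsRay G x) (hT : G.IsTree)
    (h : ∀ᶠ n in atTop, x n ∈ G.halfTree u v) :
    ∀ᶠ n in atTop, G.halfTree (x n) (x (n + 1)) ⊆ G.halfTree u v ∧
      v ∉ G.halfTree (x n) (x (n + 1)) := by
  filter_upwards [hx.eventually_notMem_halfTree hT u, hx.eventually_notMem_halfTree hT v,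
    (tendsto_add_atTop_nat 1).eventually h] with n hu hv hn
  exact ⟨hT.halfTree_subset_halfTree (hx.adj n) hu hv hn, hv⟩

theorem isRay_of_dist (hG : G.Connected) (h₀ : ∀ n, G.dist (x 0) (x n) = n)
    (h₁ : ∀ n, G.dist (x n) (x (n + 1)) ≤ 1) : IsRay G x := by
  have hle : ∀ m k, G.dist (x m) (x (m + k)) ≤ k := by
    intro m k
    induction k with
    | zero => simp
    | succ k ih =>
      have := hG.dist_triangle (u := x m) (v := x (m + k)) (w := x (m + k + 1))
      have := h₁ (m + k)
      rw [← add_assoc]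
      omega
  have key : ∀ m k, G.dist (x m) (x (m + k)) = k := fun m k => by
    have := hG.dist_triangle (u := x 0) (v := x m) (w := x (m + k))
    have := h₀ m
    have := h₀ (m + k)
    have := hle m k
    omega
  intro m n
  rcases le_total m n with h | h
  · obtain ⟨k, rfl⟩ := Nat.exists_eq_add_of_le h
    rw [key]
    omega
  · obtain ⟨k, rfl⟩ := Nat.exists_eq_add_of_le h
    rw [dist_comm, key]
    omega

theorem le_dist_of_dist_add (hG : G.Connected) {b : ℕ → V}
    (hadd : ∀ k, G.dist (b 0) (b (k + 1)) = G.dist (b 0) (b k) + G.dist (b k) (b (k + 1)))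
    (hne : ∀ k, b k ≠ b (k + 1)) (k : ℕ) : k ≤ G.dist (b 0) (b k) := by
  induction k with
  | zero => simp
  | succ k ih =>
    have := hG.pos_dist_of_ne (hne k)
    rw [hadd]
    omega

theorem exists_isRay_of_dist_add (hG : G.Connected) {b : ℕ → V}
    (hadd : ∀ k, G.dist (b 0) (b (k + 1)) = G.dist (b 0) (b k) + G.dist (b k) (b (k + 1)))
    (hne : ∀ k, b k ≠ b (k + 1)) :
    ∃ x : ℕ → V, IsRay G x ∧ ∀ k, x (G.dist (b 0) (b k)) = b k := by
  choose w hw using fun k => hG.exists_walk_length_eq_dist (b k) (b (k + 1))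
  set W := Walk.seqConcat w
  have hW : ∀ k, (W k).length = G.dist (b 0) (b k) := by
    intro k
    induction k with
    | zero => simp [W, Walk.seqConcat]
    | succ k ih => simp [W, Walk.seqConcat, ih, hw, hadd]
  have hle : ∀ k, k ≤ (W k).length := fun k => hW k ▸ le_dist_of_dist_add hG hadd hne k
  have hgetVert : ∀ n k, n ≤ (W k).length → (W n).getVert n = (W k).getVert n := by
    intro n k hn
    rcases le_total n k with h | h
    · obtain ⟨j, rfl⟩ := Nat.exists_eq_add_of_le h
      exact (Walk.getVert_seqConcat_add w (hle n) j).symm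
    · obtain ⟨j, rfl⟩ := Nat.exists_eq_add_of_le h
      exact Walk.getVert_seqConcat_add w hn j
  refine ⟨fun n => (W n).getVert n, isRay_of_dist hG (fun n => ?_) (fun n => ?_), fun k => ?_⟩
  · rw [Walk.getVert_zero]
    exact Walk.dist_getVert_of_length_eq_dist hG (hW n) (hle n)
  · rw [hgetVert n (n + 1) ((hle n).trans (by simp [W, Walk.seqConcat]))]
    simpa using (W (n + 1)).dist_getVert_le n.le_succ
  · dsimp only
    rw [hgetVert _ k (hW k).ge, ← hW k, Walk.getVert_length]

end Rays

section Shadows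

variable {V : Type*} {G : SimpleGraph V} {u v : V}

theorem eventually_add_mem_iff {x : ℕ → V} {S : Set V} (k : ℕ) :
    (∀ᶠ n in atTop, x (n + k) ∈ S) ↔ ∀ᶠ n in atTop, x n ∈ S := by
  simpa only [tendsto_principal] using tendsto_add_atTop_iff_nat (f := x) (l := 𝓟 S) k

theorem Cofinal.eventually_mem_iff {x y : ℕ → V} (h : Cofinal x y) (S : Set V) :
    (∀ᶠ n in atTop, x n ∈ S) ↔ ∀ᶠ n in atTop, y n ∈ S := by
  obtain ⟨a, b, hab⟩ := h
  rw [← eventually_add_mem_iff b, ← eventually_add_mem_iff (x := y) a]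
  exact ⟨fun hx => (hab.and hx).mono fun n hn => hn.1 ▸ hn.2,
    fun hy => (hab.and hy).mono fun n hn => hn.1 ▸ hn.2⟩

theorem mk_mem_shadow_iff {r : Ray G} :
    Boundary.mk G r ∈ Shadow G u v ↔ ∀ᶠ n in atTop, r.1 n ∈ G.halfTree u v := by
  refine ⟨fun ⟨s, hs, hev⟩ => ?_, fun h => ⟨r, rfl, h⟩⟩
  have := congrArg (Quot.lift (fun s : Ray G => ∀ᶠ n in atTop, s.1 n ∈ G.halfTree u v)
    fun s t hst => propext (hst.eventually_mem_iff _)) hs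
  exact cast this hev

theorem mk_mem_shadow (r : Ray G) (n : ℕ) :
    Boundary.mk G r ∈ Shadow G (r.1 n) (r.1 (n + 1)) :=
  mk_mem_shadow_iff.2 (eventually_atTop.2 ⟨n + 1, fun _ hm => r.2.mem_halfTree hm⟩)

theorem shadow_mono {x y : V} (h : G.halfTree x y ⊆ G.halfTree u v) :
    Shadow G x y ⊆ Shadow G u v :=
  fun _ ⟨s, hs, hev⟩ => ⟨s, hs, hev.mono fun _ hn => h hn⟩

theorem isOpen_shadow (huv : G.Adj u v) : IsOpen (Shadow G u v) :=
  TopologicalSpace.GenerateOpen.basic _ ⟨u, v, huv, rfl⟩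

theorem SimpleGraph.IsTree.eventually_shadow_subset (hT : G.IsTree) {O : Set (Boundary G)}
    (hO : IsOpen O) {r : Ray G} (hr : Boundary.mk G r ∈ O) :
    ∀ᶠ n in atTop, Shadow G (r.1 n) (r.1 (n + 1)) ⊆ O := by
  induction hO generalizing r with
  | basic s hs =>
    obtain ⟨u, v, -, rfl⟩ := hs
    exact (r.2.eventually_halfTree_subset hT (mk_mem_shadow_iff.1 hr)).mono
      fun n hn => shadow_mono hn.1
  | univ => exact Eventually.of_forall fun n => subset_univ _
  | inter s t _ _ hs ht =>
    exact ((hs hr.1).and (ht hr.2)).mono fun n hn => subset_inter hn.1 hn.2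
  | sUnion S _ hS =>
    obtain ⟨s, hsS, hrs⟩ := hr
    exact (hS s hsS hrs).mono fun n hn => hn.trans (subset_sUnion_of_mem hsS)

theorem SimpleGraph.IsTree.exists_dart_shadow_subset (hT : G.IsTree) {d : G.Dart}
    (hd : (Shadow G d.fst d.snd).Nonempty) {O : Set (Boundary G)} (hO : IsOpen O)
    (hO' : Dense O) :
    ∃ d' : G.Dart, (Shadow G d'.fst d'.snd).Nonempty ∧
      Shadow G d'.fst d'.snd ⊆ O ∩ Shadow G d.fst d.snd ∧
      G.halfTree d'.fst d'.snd ⊆ G.halfTree d.fst d.snd ∧ d.snd ∉ G.halfTree d'.fst d'.snd := by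
  obtain ⟨ξ, hξd, hξO⟩ := hO'.inter_open_nonempty _ (isOpen_shadow d.adj) hd
  obtain ⟨s, rfl⟩ := Quot.exists_rep ξ
  obtain ⟨n, hO, hd⟩ := ((hT.eventually_shadow_subset (hO.inter (isOpen_shadow d.adj))
    ⟨hξO, hξd⟩).and (s.2.eventually_halfTree_subset hT (mk_mem_shadow_iff.1 hξd))).exists
  exact ⟨⟨(s.1 n, s.1 (n + 1)), s.2.adj n⟩, ⟨_, mk_mem_shadow s n⟩, hO, hd⟩

theorem SimpleGraph.IsTree.exists_forall_mem_shadow (hT : G.IsTree) (d : ℕ → G.Dart)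
    (hsub : ∀ k, G.halfTree (d (k + 1)).fst (d (k + 1)).snd ⊆ G.halfTree (d k).fst (d k).snd)
    (hout : ∀ k, (d k).snd ∉ G.halfTree (d (k + 1)).fst (d (k + 1)).snd) :
    ∃ ξ, ∀ k, ξ ∈ Shadow G (d k).fst (d k).snd := by
  set b := fun k => (d k).snd
  set H := fun k => G.halfTree (d k).fst (d k).snd
  have hanti : Antitone H := antitone_nat_of_succ_le hsub
  have hb_mem : ∀ k, b k ∈ H k := fun k => (d k).adj.mem_halfTree
  have hb_notMem : ∀ {j k}, j < k → b j ∉ H k := fun hjk hb => hout _ (hanti hjk hb)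
  have hadd : ∀ k, G.dist (b 0) (b (k + 1)) = G.dist (b 0) (b k) + G.dist (b k) (b (k + 1)) := by
    rintro (_ | k)
    · simp
    · exact hT.dist_eq_dist_add_dist_of_notMem_halfTree (d (k + 1)).adj (hb_notMem k.succ_pos)
        (hsub _ (hb_mem _))
  have hne : ∀ k, b k ≠ b (k + 1) := fun k h => hb_notMem k.lt_succ_self (h ▸ hb_mem (k + 1))
  obtain ⟨x, hx, hxb⟩ := exists_isRay_of_dist_add hT.connected hadd hne
  refine ⟨Boundary.mk G ⟨x, hx⟩, fun k => mk_mem_shadow_iff.2 ?_⟩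
  refine eventually_atTop.2 ⟨G.dist (b 0) (b k), fun n hn => by_contra fun hxn => ?_⟩
  have hcut : G.dist (x n) (b (n + k)) = G.dist (x n) (b k) + G.dist (b k) (b (n + k)) :=
    hT.dist_eq_dist_add_dist_of_notMem_halfTree (d k).adj hxn
      (hanti (k.le_add_left n) (hb_mem (n + k)))
  have hlen := le_dist_of_dist_add hT.connected hadd hne (n + k)
  rw [← hxb k, ← hxb (n + k), hx.dist_of_le (by omega : n ≤ _), dist_comm (u := x n),
    hx.dist_of_le hn, hx.dist_of_le (by omega : G.dist (b 0) (b k) ≤ _)] at hcut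
  have hxnb : x n = b k := by rw [show n = G.dist (b 0) (b k) by omega, hxb]
  exact hxn (show x n ∈ H k from hxnb ▸ hb_mem k)

end Shadows

section Statements

variable {V : Type*}

theorem statement7_general (G : SimpleGraph V) (hT : G.IsTree) :
    BaireSpace (Boundary G) := by
  refine ⟨fun f hfo hfd => dense_iff_inter_open.2 fun U hU ⟨ξ, hξ⟩ => ?_⟩
  obtain ⟨r, rfl⟩ := Quot.exists_rep ξ
  obtain ⟨N, hN⟩ := (hT.eventually_shadow_subset hU hξ).exists
  let E := {d : G.Dart // (Shadow G d.fst d.snd).Nonempty}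
  choose next hnext using fun (e : E) (k : ℕ) =>
    hT.exists_dart_shadow_subset e.2 (hfo k) (hfd k)
  let e : ℕ → E := fun k => Nat.rec ⟨⟨(r.1 N, r.1 (N + 1)), r.2.adj N⟩, _, mk_mem_shadow r N⟩
    (fun k e => ⟨next e k, (hnext e k).1⟩) k
  obtain ⟨η, hη⟩ := hT.exists_forall_mem_shadow (fun k => (e k).1)
    (fun k => (hnext (e k) k).2.2.1) (fun k => (hnext (e k) k).2.2.2)
  exact ⟨η, hN (hη 0), mem_iInter.2 fun k => ((hnext (e k) k).2.1 (hη (k + 1))).1⟩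

theorem statement7 [Countable V] (G : SimpleGraph V) (hT : G.IsTree) :
    BaireSpace (Boundary G) :=
  statement7_general G hT

end Statements
end

section
/- Let Γ be a group acting strongly hyperbolically on a tree T by automorphisms. Then for any hyperbolic element γ₀ ∈ Γ there exists a sequence (γ_n)_{n≥1} of hyperbolic elements of Γ such that the elements γ_n, n ≥ 0, are pairwise transverse (in particular, pairwise distinct). -/
open Filter Set

section Toolkit
open SimpleGraph
variable {V : Type*} {G : SimpleGraph V}

/-- Betweenness in a graph. -/
def GBtw (G : SimpleGraph V) (x y z : V) : Prop :=
  G.dist x y + G.dist y z = G.dist x z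

lemma gdist_comm (G : SimpleGraph V) (x y : V) : G.dist x y = G.dist y x :=
  SimpleGraph.dist_comm

namespace GBtw

lemma self_left (G : SimpleGraph V) (x z : V) : GBtw G x x z := by
  simp [GBtw]

lemma self_right (G : SimpleGraph V) (x z : V) : GBtw G x z z := by
  simp [GBtw]

lemma symm {x y z : V} (h : GBtw G x y z) : GBtw G z y x := by
  unfold GBtw at *
  rw [gdist_comm G z y, gdist_comm G y x, gdist_comm G z x]
  omega

end GBtw

variable (hT : G.IsTree)
include hT

lemma tree_reach (x y : V) : G.Reachable x y := hT.isConnected x y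

lemma tree_dist_triangle (x y z : V) : G.dist x z ≤ G.dist x y + G.dist y z :=
  hT.isConnected.dist_triangle

lemma tree_dist_eq_zero {x y : V} (h : G.dist x y = 0) : x = y :=
  (hT.isConnected.dist_eq_zero_iff).mp h

lemma tree_dist_pos {x y : V} (h : x ≠ y) : 1 ≤ G.dist x y :=
  hT.isConnected.pos_dist_of_ne h

/-- any path in a tree has length equal to the distance -/
lemma tree_path_length {x y : V} {p : G.Walk x y} (hp : p.IsPath) :
    p.length = G.dist x y := by
  obtain ⟨q, hq, hqlen⟩ := (tree_reach hT x y).exists_path_of_dist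
  have : p = q := congrArg Subtype.val (hT.IsAcyclic.path_unique ⟨p, hp⟩ ⟨q, hq⟩)
  rw [this, hqlen]

/-- uniqueness of geodesic walks in a tree -/
lemma tree_geo_unique {x y : V} (w₁ w₂ : G.Walk x y)
    (h₁ : w₁.length = G.dist x y) (h₂ : w₂.length = G.dist x y) : w₁ = w₂ := by
  have p₁ := w₁.isPath_of_length_eq_dist h₁
  have p₂ := w₂.isPath_of_length_eq_dist h₂
  exact congrArg Subtype.val (hT.IsAcyclic.path_unique ⟨w₁, p₁⟩ ⟨w₂, p₂⟩)

/-- existence of geodesic walks -/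
lemma tree_geo_exists (x y : V) : ∃ w : G.Walk x y, w.length = G.dist x y :=
  (tree_reach hT x y).exists_walk_length_eq_dist

/-- splitting a geodesic walk at a support vertex -/
lemma tree_split {x z : V} (w : G.Walk x z) (hw : w.length = G.dist x z)
    {y : V} (hy : y ∈ w.support) : GBtw G x y z := by
  classical
  have hspec := w.take_spec hy
  have hlen : (w.takeUntil y hy).length + (w.dropUntil y hy).length = w.length := by
    conv_rhs => rw [← hspec]
    rw [SimpleGraph.Walk.length_append]
  have h1 : G.dist x y ≤ (w.takeUntil y hy).length := SimpleGraph.dist_le _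
  have h2 : G.dist y z ≤ (w.dropUntil y hy).length := SimpleGraph.dist_le _
  have h3 : G.dist x z ≤ G.dist x y + G.dist y z := tree_dist_triangle hT x y z
  unfold GBtw; omega

/-- gluing geodesics along a betweenness relation -/
lemma tree_glue {x y z : V} (h : GBtw G x y z) :
    ∃ w : G.Walk x z, w.length = G.dist x z ∧ y ∈ w.support := by
  obtain ⟨w₁, h₁⟩ := tree_geo_exists hT x y
  obtain ⟨w₂, h₂⟩ := tree_geo_exists hT y z
  refine ⟨w₁.append w₂, ?_, ?_⟩
  · rw [SimpleGraph.Walk.length_append, h₁, h₂]; exact h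
  · rw [SimpleGraph.Walk.mem_support_append_iff]
    exact Or.inl (SimpleGraph.Walk.end_mem_support w₁)

/-- a vertex between x and z lies on every geodesic from x to z -/
lemma tree_mem_geo {x y z : V} (h : GBtw G x y z) (w : G.Walk x z)
    (hw : w.length = G.dist x z) : y ∈ w.support := by
  obtain ⟨w', hw', hy⟩ := tree_glue hT h
  rwa [tree_geo_unique hT w w' hw hw']

/-- parity: adjacent vertices have different distances to any root -/
lemma tree_parity {u v : V} (hadj : G.Adj u v) (r : V) : G.dist r u ≠ G.dist r v := by
  intro heq
  obtain ⟨P, hPp, hP⟩ := (tree_reach hT r u).exists_path_of_dist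
  by_cases hv : v ∈ P.support
  · have hb := tree_split hT P hP hv
    have : 1 ≤ G.dist v u := tree_dist_pos hT (G.ne_of_adj hadj.symm)
    unfold GBtw at hb; omega
  · have hpath : (SimpleGraph.Walk.cons hadj.symm P.reverse).IsPath :=
      hPp.reverse.cons (by simpa using hv)
    have hlen := tree_path_length hT hpath
    rw [SimpleGraph.Walk.length_cons, SimpleGraph.Walk.length_reverse] at hlen
    rw [hP, gdist_comm G v r] at hlen
    omega

/-- one step along a geodesic -/
lemma tree_step {x z : V} (h : x ≠ z) :
    ∃ x', G.Adj x x' ∧ G.dist x' z + 1 = G.dist x z := by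
  obtain ⟨w, hw⟩ := tree_geo_exists hT x z
  cases w with
  | nil => exact absurd rfl h
  | cons hadj p =>
    rename_i x'
    refine ⟨x', hadj, ?_⟩
    have h1 : G.dist x' z ≤ p.length := SimpleGraph.dist_le p
    have h2 : G.dist x z ≤ G.dist x x' + G.dist x' z := tree_dist_triangle hT _ _ _
    have h3 : G.dist x x' ≤ 1 := by
      rw [SimpleGraph.dist_eq_one_iff_adj.mpr hadj]
    rw [SimpleGraph.Walk.length_cons] at hw
    omega

/-- comparison of two points between a and c -/
lemma tree_cmp {a b b' c : V} (h1 : GBtw G a b c) (h2 : GBtw G a b' c)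
    (hle : G.dist a b ≤ G.dist a b') : GBtw G a b b' := by
  obtain ⟨w₁, hw₁⟩ := tree_geo_exists hT a b'
  obtain ⟨w₂, hw₂⟩ := tree_geo_exists hT b' c
  have hw : (w₁.append w₂).length = G.dist a c := by
    rw [SimpleGraph.Walk.length_append, hw₁, hw₂]; exact h2
  have hb : b ∈ (w₁.append w₂).support := tree_mem_geo hT h1 _ hw
  rw [SimpleGraph.Walk.mem_support_append_iff] at hb
  rcases hb with hb | hb
  · exact tree_split hT w₁ hw₁ hb
  · have hb3 := tree_split hT w₂ hw₂ hb
    unfold GBtw at *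
    have e1 : G.dist b' b = G.dist b b' := gdist_comm G b' b
    have hbb' : G.dist b' b = 0 := by omega
    have : b' = b := tree_dist_eq_zero hT hbb'
    subst this
    have e2 : G.dist b' b' = 0 := by simp
    omega

/-- medians exist in trees -/
lemma tree_median (x y z : V) :
    ∃ m, GBtw G x m y ∧ GBtw G y m z ∧ GBtw G x m z := by
  generalize hn : G.dist y z = n
  induction n generalizing y with
  | zero =>
    have : y = z := tree_dist_eq_zero hT hn
    subst this
    exact ⟨y, GBtw.self_right G x y, GBtw.self_left G y y, GBtw.self_right G x y⟩
  | succ n ih =>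
    have hyz : y ≠ z := by
      intro h; subst h; rw [SimpleGraph.dist_self] at hn; omega
    obtain ⟨y', hadj, hstep⟩ := tree_step hT hyz
    have hy'z : G.dist y' z = n := by omega
    obtain ⟨m, hm1, hm2, hm3⟩ := ih y' hy'z
    have hyy' : G.dist y y' = 1 := SimpleGraph.dist_eq_one_iff_adj.mpr hadj
    have hy'y : G.dist y' y = 1 := by rw [gdist_comm G y' y]; exact hyy'
    have htri1 : G.dist y z ≤ G.dist y m + G.dist m z := tree_dist_triangle hT _ _ _
    have htri2 : G.dist y m ≤ G.dist y y' + G.dist y' m := tree_dist_triangle hT _ _ _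
    have e1 : G.dist m y = G.dist y m := gdist_comm G m y
    have e2 : G.dist m y' = G.dist y' m := gdist_comm G m y'
    have hym : G.dist y m = 1 + G.dist y' m := by
      unfold GBtw at hm2; omega
    have hbymz : GBtw G y m z := by
      unfold GBtw at hm2 ⊢; omega
    have hpar := tree_parity hT hadj x
    have htri3 : G.dist x y ≤ G.dist x y' + G.dist y' y := tree_dist_triangle hT _ _ _
    have htri4 : G.dist x y' ≤ G.dist x y + G.dist y y' := tree_dist_triangle hT _ _ _
    rcases Nat.lt_or_ge (G.dist x y') (G.dist x y) with hc | hc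
    · refine ⟨m, ?_, hbymz, hm3⟩
      unfold GBtw at hm1 ⊢
      omega
    · have hxy' : G.dist x y' = G.dist x y + 1 := by omega
      have hbxyy' : GBtw G x y y' := by unfold GBtw; omega
      have hk : G.dist y' m = 0 := by
        by_contra hk0
        have hle : G.dist x m ≤ G.dist x y := by
          unfold GBtw at hm1; omega
        have hcmp := tree_cmp hT hm1 hbxyy' hle
        unfold GBtw at hcmp hm1
        omega
      have : y' = m := tree_dist_eq_zero hT hk
      subst this
      refine ⟨y, GBtw.self_right G x y, GBtw.self_left G y z, ?_⟩
      unfold GBtw at hm3 ⊢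
      omega

end Toolkit


section Toolkit2
open SimpleGraph
variable {V : Type*} {G : SimpleGraph V}

/-- A bi-infinite geodesic line in a graph. -/
def IsZLine (G : SimpleGraph V) (φ : ℤ → V) : Prop :=
  ∀ i j : ℤ, i ≤ j → (G.dist (φ i) (φ j) : ℤ) = j - i

/-- Geodesically convex subsets. -/
def GConvex (G : SimpleGraph V) (S : Set V) : Prop :=
  ∀ a ∈ S, ∀ b ∈ S, ∀ y, GBtw G a y b → y ∈ S

lemma IsZLine.dist_eq {φ : ℤ → V} (hφ : IsZLine G φ) (i j : ℤ) :
    (G.dist (φ i) (φ j) : ℤ) = |j - i| := by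
  rcases le_total i j with h | h
  · rw [hφ i j h, abs_of_nonneg (by omega)]
  · rw [gdist_comm G (φ i) (φ j), hφ j i h, abs_of_nonpos (by omega)]; ring

lemma IsZLine.injective {φ : ℤ → V} (hφ : IsZLine G φ) : Function.Injective φ := by
  intro i j h
  rcases le_total i j with hle | hle
  · have := hφ i j hle
    rw [h] at this
    simp only [SimpleGraph.dist_self, Nat.cast_zero] at this
    omega
  · have := hφ j i hle
    rw [h] at this
    simp only [SimpleGraph.dist_self, Nat.cast_zero] at this
    omega

variable (hT : G.IsTree)
include hT

lemma tree_line_convex {φ : ℤ → V} (hφ : IsZLine G φ) :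
    ∀ (n : ℕ) (a b : ℤ), b = a + n → ∀ y, GBtw G (φ a) y (φ b) →
      ∃ k, a ≤ k ∧ k ≤ b ∧ y = φ k := by
  intro n
  induction n with
  | zero =>
    intro a b hb y hy
    have hab : φ a = φ b := by rw [hb]; norm_num
    rw [← hab] at hy
    unfold GBtw at hy
    simp only [SimpleGraph.dist_self] at hy
    have e1 : G.dist (φ a) y = G.dist y (φ a) := gdist_comm G _ _
    have : G.dist (φ a) y = 0 := by omega
    exact ⟨a, le_refl a, by omega, (tree_dist_eq_zero hT this).symm⟩
  | succ n ih =>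
    intro a b hb y hy
    by_cases hya : y = φ a
    · exact ⟨a, le_refl a, by omega, hya⟩
    · have d1 : (G.dist (φ a) (φ (a+1)) : ℤ) = 1 := by
        rw [hφ a (a+1) (by omega)]; ring
      have d2 : (G.dist (φ (a+1)) (φ b) : ℤ) = n := by
        rw [hφ (a+1) b (by omega)]; omega
      have d3 : (G.dist (φ a) (φ b) : ℤ) = n + 1 := by
        rw [hφ a b (by omega)]; omega
      have hbtw : GBtw G (φ a) (φ (a+1)) (φ b) := by
        unfold GBtw; omega
      have hge : 1 ≤ G.dist (φ a) y := tree_dist_pos hT (fun h => hya h.symm)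
      have hle : G.dist (φ a) (φ (a+1)) ≤ G.dist (φ a) y := by omega
      have hcmp := tree_cmp hT hbtw hy hle
      have hy2 : GBtw G (φ (a+1)) y (φ b) := by
        unfold GBtw at hy hcmp ⊢
        have e1 : G.dist (φ (a+1)) y = G.dist y (φ (a+1)) := gdist_comm G _ _
        omega
      obtain ⟨k, hk1, hk2, hk3⟩ := ih (a+1) b (by omega) y hy2
      exact ⟨k, by omega, hk2, hk3⟩

lemma tree_line_gconvex {φ : ℤ → V} (hφ : IsZLine G φ) : GConvex G (Set.range φ) := by
  rintro _ ⟨a, rfl⟩ _ ⟨b, rfl⟩ y hy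
  rcases le_total a b with h | h
  · obtain ⟨k, -, -, hk⟩ := tree_line_convex hT hφ (b - a).toNat a b (by omega) y hy
    exact ⟨k, hk.symm⟩
  · obtain ⟨k, -, -, hk⟩ := tree_line_convex hT hφ (a - b).toNat b a (by omega) y hy.symm
    exact ⟨k, hk.symm⟩

omit hT

/-- closest point to a nonempty set -/
lemma exists_closest (S : Set V) (hS : S.Nonempty) (x : V) :
    ∃ p ∈ S, ∀ z ∈ S, G.dist x p ≤ G.dist x z := by
  have hne : {n | ∃ z ∈ S, G.dist x z = n}.Nonempty := by
    obtain ⟨z, hz⟩ := hS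
    exact ⟨G.dist x z, z, hz, rfl⟩
  obtain ⟨p, hp, hpd⟩ := Nat.sInf_mem hne
  refine ⟨p, hp, fun z hz => ?_⟩
  rw [hpd]
  exact Nat.sInf_le ⟨z, hz, rfl⟩

include hT

/-- the closest point in a convex set is a gate -/
lemma tree_gate {S : Set V} (hS : GConvex G S) {x p : V} (hp : p ∈ S)
    (hmin : ∀ z ∈ S, G.dist x p ≤ G.dist x z) {q : V} (hq : q ∈ S) :
    GBtw G x p q := by
  obtain ⟨m, hm1, hm2, hm3⟩ := tree_median hT x p q
  have hmS : m ∈ S := hS p hp q hq m hm2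
  have := hmin m hmS
  unfold GBtw at hm1 hm3 ⊢
  have hmp : G.dist m p = 0 := by omega
  have : m = p := tree_dist_eq_zero hT hmp
  subst this
  omega

/-- adjacent vertices have different distances to a convex set -/
lemma tree_adj_dist_convex {S : Set V} (hS : GConvex G S) {x y p q : V}
    (hadj : G.Adj x y) (hp : p ∈ S) (hminp : ∀ z ∈ S, G.dist x p ≤ G.dist x z)
    (hq : q ∈ S) (hminq : ∀ z ∈ S, G.dist y q ≤ G.dist y z)
    (hs : 1 ≤ G.dist x p) (heq : G.dist x p = G.dist y q) : False := by
  by_cases hpq : p = q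
  · subst hpq
    have := tree_parity hT hadj p
    rw [gdist_comm G p x, gdist_comm G p y] at this
    exact this (by omega)
  · have hgx : GBtw G x p q := tree_gate hT hS hp hminp hq
    have hxy : G.dist x y = 1 := SimpleGraph.dist_eq_one_iff_adj.mpr hadj
    have htri : G.dist x q ≤ G.dist x y + G.dist y q := tree_dist_triangle hT _ _ _
    have hpq1 : G.dist p q = 1 := by
      have : 1 ≤ G.dist p q := tree_dist_pos hT hpq
      unfold GBtw at hgx; omega
    have hxq : G.dist x q = G.dist x p + 1 := by unfold GBtw at hgx; omega
    -- two geodesic walks from x to q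
    obtain ⟨P, hPlen⟩ := tree_geo_exists hT x p
    obtain ⟨Q, hQlen⟩ := tree_geo_exists hT y q
    have hadjpq : G.Adj p q := SimpleGraph.dist_eq_one_iff_adj.mp hpq1
    set E : G.Walk p q := SimpleGraph.Walk.cons hadjpq SimpleGraph.Walk.nil with hE
    have hW1 : (P.append E).length = G.dist x q := by
      rw [SimpleGraph.Walk.length_append, hPlen, hE]
      simp [hxq]
    have hW2 : (SimpleGraph.Walk.cons hadj Q).length = G.dist x q := by
      rw [SimpleGraph.Walk.length_cons, hQlen]
      omega
    have hweq := tree_geo_unique hT _ _ hW1 hW2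
    have hy2 : y ∈ (SimpleGraph.Walk.cons hadj Q).support := by
      rw [SimpleGraph.Walk.support_cons]
      exact List.mem_cons_of_mem _ Q.start_mem_support
    rw [← hweq] at hy2
    rw [SimpleGraph.Walk.mem_support_append_iff] at hy2
    rcases hy2 with hy2 | hy2
    · have hbt := tree_split hT P hPlen hy2
      have : G.dist y q ≤ G.dist y p := hminq p hp
      unfold GBtw at hbt
      omega
    · have hy3 : y = p ∨ y = q := by
        rw [hE] at hy2
        simp only [SimpleGraph.Walk.support_cons, SimpleGraph.Walk.support_nil,
          List.mem_cons, List.mem_singleton, List.not_mem_nil, or_false] at hy2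
        tauto
      have hyS : y ∈ S := by
        rcases hy3 with h3 | h3
        · rw [h3]; exact hp
        · rw [h3]; exact hq
      have hyq : G.dist y q ≤ G.dist y y := hminq y hyS
      rw [SimpleGraph.dist_self] at hyq
      omega

/-- distances to vertices along geodesic walks -/
lemma tree_geo_getVert {x z : V} (w : G.Walk x z) (hw : w.length = G.dist x z) :
    ∀ i, i ≤ w.length → G.dist x (w.getVert i) = i ∧
      G.dist (w.getVert i) z = w.length - i := by
  induction w with
  | nil =>
    intro i hi
    simp only [SimpleGraph.Walk.length_nil, Nat.le_zero] at hi
    subst hi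
    simp
  | cons hadj p ihp =>
    rename_i a b c
    intro i hi
    rw [SimpleGraph.Walk.length_cons] at hw hi
    have hbc : G.dist b c ≤ p.length := SimpleGraph.dist_le p
    have htri : G.dist a c ≤ G.dist a b + G.dist b c := tree_dist_triangle hT _ _ _
    have hab : G.dist a b = 1 := SimpleGraph.dist_eq_one_iff_adj.mpr hadj
    have hp : p.length = G.dist b c := by omega
    cases i with
    | zero => simp [SimpleGraph.Walk.getVert_zero, ← hw]
    | succ j =>
      have hj : j ≤ p.length := by omega
      obtain ⟨ih1, ih2⟩ := ihp hp j hj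
      rw [SimpleGraph.Walk.getVert_cons_succ]
      constructor
      · have htr1 : G.dist a (p.getVert j) ≤ G.dist a b + G.dist b (p.getVert j) :=
          tree_dist_triangle hT _ _ _
        have htr2 : G.dist a c ≤ G.dist a (p.getVert j) + G.dist (p.getVert j) c :=
          tree_dist_triangle hT _ _ _
        omega
      · rw [SimpleGraph.Walk.length_cons]
        omega

lemma tree_geo_getVert_pair {x z : V} (w : G.Walk x z) (hw : w.length = G.dist x z)
    {i j : ℕ} (hij : i ≤ j) (hj : j ≤ w.length) :
    G.dist (w.getVert i) (w.getVert j) = j - i := by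
  have hi := tree_geo_getVert hT w hw i (by omega)
  have hjj := tree_geo_getVert hT w hw j hj
  have hmi : w.getVert i ∈ w.support :=
    SimpleGraph.Walk.mem_support_iff_exists_getVert.mpr ⟨i, rfl, by omega⟩
  have hmj : w.getVert j ∈ w.support :=
    SimpleGraph.Walk.mem_support_iff_exists_getVert.mpr ⟨j, rfl, hj⟩
  have hbi := tree_split hT w hw hmi
  have hbj := tree_split hT w hw hmj
  have hcmp := tree_cmp hT hbi hbj (by omega)
  unfold GBtw at hcmp
  omega

end Toolkit2


section AxisTheory
open SimpleGraph
variable {V : Type*} {G : SimpleGraph V} {Γ : Type*} [Group Γ] [MulAction Γ V]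

/-- An axis line for a group element: an invariant geodesic line translated by `c ≥ 1`. -/
def IsAxisLine (G : SimpleGraph V) (g : Γ) (φ : ℤ → V) (c : ℕ) : Prop :=
  1 ≤ c ∧ IsZLine G φ ∧ ∀ i : ℤ, g • φ i = φ (i + c)

variable (hT : G.IsTree) (hact : IsGraphAction G Γ)

namespace IsAxisLine

variable {g : Γ} {φ : ℤ → V} {c : ℕ} (hal : IsAxisLine G g φ c)

include hal

lemma one_le : 1 ≤ c := hal.1

lemma line : IsZLine G φ := hal.2.1

lemma trans (i : ℤ) : g • φ i = φ (i + c) := hal.2.2 i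

lemma dist_nat {i j : ℤ} (hij : i ≤ j) : (G.dist (φ i) (φ j) : ℤ) = j - i := hal.2.1 i j hij

include hT hact

/-- The displacement formula: `d(y, g y) = c + 2 d(y, L)`. -/
theorem formula (y p : V) (hp : p ∈ Set.range φ)
    (hmin : ∀ z ∈ Set.range φ, G.dist y p ≤ G.dist y z) :
    G.dist y (g • y) = c + 2 * G.dist y p := by
  obtain ⟨t, rfl⟩ := hp
  set L : Set V := Set.range φ with hL
  have hconv : GConvex G L := tree_line_gconvex hT hal.line
  set p := φ t with hpdef
  set gy := g • y with hgy
  set gp := g • p with hgp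
  have hgpL : gp ∈ L := by rw [hgp, hal.trans t]; exact ⟨t + c, rfl⟩
  have hdpgp : G.dist p gp = c := by
    have h := hal.dist_nat (i := t) (j := t + c) (by omega)
    rw [hgp, hal.trans t, hpdef]
    omega
  -- g p is a closest point of L to g y
  have hming : ∀ z ∈ L, G.dist gy gp ≤ G.dist gy z := by
    rintro _ ⟨s, rfl⟩
    have h1 : g • φ (s - c) = φ s := by rw [hal.trans (s - c)]; ring_nf
    have h2 : G.dist gy (φ s) = G.dist y (φ (s - c)) := by
      rw [← h1, hgy, dist_smul_eq hact]
    have h3 : G.dist gy gp = G.dist y p := by rw [hgy, hgp, dist_smul_eq hact]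
    rw [h2, h3]
    exact hmin _ ⟨s - c, rfl⟩
  have hdgygp : G.dist gy gp = G.dist y p := by rw [hgy, hgp, dist_smul_eq hact]
  -- gates
  have hb1 : GBtw G y p gp := tree_gate hT hconv ⟨t, rfl⟩ hmin hgpL
  have hb2 : GBtw G gy gp p := tree_gate hT hconv hgpL hming ⟨t, rfl⟩
  have hdygp : G.dist y gp = G.dist y p + c := by unfold GBtw at hb1; omega
  have hdgyp : G.dist gy p = G.dist y p + c := by
    have e : G.dist gp p = G.dist p gp := gdist_comm G gp p
    unfold GBtw at hb2; omega
  -- median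
  obtain ⟨m, hm1, hm2, hm3⟩ := tree_median hT y p gy
  have hdpgy : G.dist p gy = G.dist y p + c := by rw [gdist_comm G p gy]; exact hdgyp
  have hb3 : GBtw G p gp gy := by
    unfold GBtw
    rw [gdist_comm G gp gy]
    omega
  rcases le_or_gt (G.dist p m) c with hdm | hdm
  · have hcmp := tree_cmp hT hm2 hb3 (by omega)
    have hmL : m ∈ L := hconv p ⟨t, rfl⟩ gp hgpL m hcmp
    have hminm := hmin m hmL
    have hmp : G.dist m p = 0 := by
      unfold GBtw at hm1
      omega
    have : m = p := tree_dist_eq_zero hT hmp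
    subst this
    unfold GBtw at hm3 hm1
    omega
  · exfalso
    have hcmp := tree_cmp hT hb3 hm2 (by omega)
    have htri : G.dist y gp ≤ G.dist y m + G.dist m gp := tree_dist_triangle hT _ _ _
    unfold GBtw at hm1 hcmp
    have e1 : G.dist m p = G.dist p m := gdist_comm G m p
    have e2 : G.dist m gp = G.dist gp m := gdist_comm G m gp
    have hc := hal.one_le
    omega

lemma le_disp (y : V) : c ≤ G.dist y (g • y) := by
  obtain ⟨p, hp, hmin⟩ := exists_closest (G := G) (Set.range φ) ⟨φ 0, 0, rfl⟩ y
  rw [hal.formula hT hact y p hp hmin]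
  omega

lemma mem_range_of_disp_eq {y : V} (h : G.dist y (g • y) = c) : y ∈ Set.range φ := by
  obtain ⟨p, hp, hmin⟩ := exists_closest (G := G) (Set.range φ) ⟨φ 0, 0, rfl⟩ y
  have := hal.formula hT hact y p hp hmin
  have hyp : G.dist y p = 0 := by omega
  have : y = p := tree_dist_eq_zero hT hyp
  rw [this]; exact hp

lemma disp_of_mem {y : V} (h : y ∈ Set.range φ) : G.dist y (g • y) = c := by
  have h2 := hal.formula hT hact y y h
    (fun z _ => by rw [SimpleGraph.dist_self]; omega)
  rw [SimpleGraph.dist_self] at h2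
  omega

lemma axis_eq : Axis G g = Set.range φ := by
  ext x
  constructor
  · intro hx
    have h1 : G.dist x (g • x) ≤ G.dist (φ 0) (g • φ 0) := hx (φ 0)
    have h2 : G.dist (φ 0) (g • (φ 0)) = c := hal.disp_of_mem hT hact ⟨0, rfl⟩
    have h3 := hal.le_disp hT hact x
    exact hal.mem_range_of_disp_eq hT hact (by omega)
  · intro hx y
    rw [hal.disp_of_mem hT hact hx]
    exact hal.le_disp hT hact y

lemma hyperbolic : IsHyperbolicAut G g := by
  constructor
  · rintro ⟨v, hv⟩
    have h1 := hal.le_disp hT hact v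
    rw [hv, SimpleGraph.dist_self] at h1
    have h2 := hal.one_le
    omega
  · rintro ⟨u, w, hadj, hu, hw⟩
    have hd1 : G.dist u (g • u) = 1 := by
      rw [hu]; exact SimpleGraph.dist_eq_one_iff_adj.mpr hadj
    have hc1 : c = 1 := by
      have ha := hal.le_disp hT hact u
      have hb := hal.one_le
      omega
    obtain ⟨t, rfl⟩ := hal.mem_range_of_disp_eq hT hact (by rw [hd1, hc1])
    have h1 : w = φ (t + 1) := by
      rw [← hu, hal.trans t, hc1]; norm_num
    have h2 : g • w = φ (t + 2) := by
      rw [h1, hal.trans (t + 1), hc1]; ring_nf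
    rw [hw] at h2
    have := hal.line.injective h2
    omega

omit hT hact

lemma pow {m : ℕ} (hm : 1 ≤ m) : IsAxisLine G (g ^ m) φ (m * c) := by
  refine ⟨by simpa using Nat.mul_le_mul hm hal.one_le, hal.line, ?_⟩
  have key : ∀ (n : ℕ) (i : ℤ), g ^ n • φ i = φ (i + (n * c : ℕ)) := by
    intro n
    induction n with
    | zero => intro i; simp
    | succ n ih =>
      intro i
      rw [pow_succ, mul_smul, hal.trans, ih]
      congr 1
      push_cast
      ring
  exact key m

lemma conj (h : Γ) (hactΓ : IsGraphAction G Γ) :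
    IsAxisLine G (h * g * h⁻¹) (fun i => h • φ i) c := by
  refine ⟨hal.one_le, ?_, ?_⟩
  · intro i j hij
    rw [dist_smul_eq hactΓ]
    exact hal.line i j hij
  · intro i
    simp only []
    rw [mul_smul, mul_smul, inv_smul_smul, hal.trans]

end IsAxisLine
end AxisTheory


section ExistAxis
open SimpleGraph
variable {V : Type*} {G : SimpleGraph V} {Γ : Type*} [Group Γ] [MulAction Γ V]

lemma walk_getVert_map {f : G →g G} {x y : V} (p : G.Walk x y) :
    ∀ i : ℕ, (p.map f).getVert i = f (p.getVert i) := by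
  induction p with
  | nil =>
    intro i
    rw [SimpleGraph.Walk.map_nil, SimpleGraph.Walk.getVert_of_length_le _ (by simp),
      SimpleGraph.Walk.getVert_of_length_le _ (by simp)]
  | cons h q ih =>
    intro i
    cases i with
    | zero => simp
    | succ j =>
      rw [SimpleGraph.Walk.map_cons, SimpleGraph.Walk.getVert_cons_succ,
        SimpleGraph.Walk.getVert_cons_succ]
      exact ih j

variable (hT : G.IsTree) (hact : IsGraphAction G Γ)
include hT hact

/-- smul distance between betweenness triples transports -/
lemma gbtw_smul {x y z : V} (γ : Γ) (h : GBtw G x y z) :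
    GBtw G (γ • x) (γ • y) (γ • z) := by
  unfold GBtw at *
  rw [dist_smul_eq hact, dist_smul_eq hact, dist_smul_eq hact]
  exact h

/-- Serre: doubling of minimal displacement -/
lemma serre_double {g : Γ} (hhyp : IsHyperbolicAut G g) {x : V} {ℓ : ℕ}
    (hx : G.dist x (g • x) = ℓ) (hmin : ∀ y : V, ℓ ≤ G.dist y (g • y)) :
    G.dist x (g • g • x) = 2 * ℓ := by
  have hl1 : 1 ≤ ℓ := by
    rcases Nat.eq_zero_or_pos ℓ with h0 | h1
    · exfalso
      rw [h0] at hx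
      exact hhyp.1 ⟨x, (tree_dist_eq_zero hT hx).symm⟩
    · exact h1
  set x1 := g • x with hx1
  set x2 := g • x1 with hx2
  have hd12 : G.dist x1 x2 = ℓ := by rw [hx1, hx2, dist_smul_eq hact]; exact hx
  obtain ⟨m, hm1, hm2, hm3⟩ := tree_median hT x x1 x2
  set k := G.dist m x1 with hk
  have hxm : G.dist x m = ℓ - k ∧ k ≤ ℓ := by
    unfold GBtw at hm1; constructor <;> omega
  have hgm : GBtw G x1 (g • m) x2 := by
    have := gbtw_smul hT hact g hm1
    rwa [← hx1, ← hx2] at this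
  have hdx1gm : G.dist x1 (g • m) = ℓ - k := by
    rw [hx1, dist_smul_eq hact]
    exact hxm.1
  have hminm := hmin m
  have e0 : G.dist x1 m = k := gdist_comm G x1 m
  rcases le_or_gt (2 * k) ℓ with hcase | hcase
  · -- small overlap: get Btw x1 m (g m), displacement ℓ - 2k
    have hb1 : GBtw G x1 m x2 := hm2
    have hcmp := tree_cmp hT hb1 hgm (by omega)
    have hdm : G.dist m (g • m) = ℓ - 2 * k := by
      unfold GBtw at hcmp
      omega
    have hk0 : k = 0 := by omega
    unfold GBtw at hm2 hm3 hm1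
    omega
  · -- big overlap: forces g g x = x, then reflection argument
    exfalso
    have hcmp := tree_cmp hT hgm hm2 (by omega)
    have hdm : G.dist (g • m) m = k - (ℓ - k) := by
      unfold GBtw at hcmp
      omega
    have hdm' : G.dist m (g • m) = k - (ℓ - k) := by
      rw [gdist_comm G m (g • m)]; exact hdm
    have hkl : k = ℓ := by omega
    have hxm0 : G.dist x m = 0 := by omega
    have hxmeq : x = m := tree_dist_eq_zero hT hxm0
    subst hxmeq
    -- now GBtw x1 x x2 with d x1 x = ℓ, so d x x2 = 0
    have hxx2 : x2 = x := by
      unfold GBtw at hm2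
      have : G.dist x x2 = 0 := by omega
      exact (tree_dist_eq_zero hT this).symm
    -- reflection
    obtain ⟨W, hW⟩ := tree_geo_exists hT x x1
    have hWlen : W.length = ℓ := by rw [hW, hx1, hx]
    set f : G →g G := ⟨fun z => g • z, fun h => (hact g _ _).mp h⟩ with hf
    have hx2x : g • x1 = x := hxx2
    set W2 : G.Walk x1 x := (W.map f).copy rfl (by rw [hf]; exact hx2x) with hW2
    have hW2len : W2.length = ℓ := by
      rw [hW2, SimpleGraph.Walk.length_copy, SimpleGraph.Walk.length_map, hWlen]
    have hdx1x : G.dist x1 x = ℓ := by rw [gdist_comm G x1 x, hx]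
    have hWrev : W.reverse.length = ℓ := by rw [SimpleGraph.Walk.length_reverse, hWlen]
    have heqw : W2 = W.reverse := by
      apply tree_geo_unique hT <;> rw [hdx1x]
      · exact hW2len
      · exact hWrev
    have hgv : ∀ i : ℕ, g • W.getVert i = W.getVert (ℓ - i) := by
      intro i
      have h1 : W2.getVert i = g • W.getVert i := by
        rw [hW2, SimpleGraph.Walk.getVert_copy, walk_getVert_map]
        rfl
      have h2 : W.reverse.getVert i = W.getVert (W.length - i) :=
        SimpleGraph.Walk.getVert_reverse W i
      rw [← h1, heqw, h2, hWlen]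
    rcases Nat.even_or_odd ℓ with ⟨j, hj⟩ | ⟨j, hj⟩
    · -- even: fixed point
      have := hgv j
      rw [show ℓ - j = j by omega] at this
      exact hhyp.1 ⟨W.getVert j, this⟩
    · -- odd: inversion
      have hadj : G.Adj (W.getVert j) (W.getVert (j + 1)) :=
        W.adj_getVert_succ (by omega)
      have h1 := hgv j
      have h2 := hgv (j + 1)
      rw [show ℓ - j = j + 1 by omega] at h1
      rw [show ℓ - (j + 1) = j by omega] at h2
      exact hhyp.2 ⟨W.getVert j, W.getVert (j + 1), hadj, h1, h2⟩

/-- distances along the orbit of a minimizer -/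
lemma serre_orbit {g : Γ} (hhyp : IsHyperbolicAut G g) {x : V} {ℓ : ℕ}
    (hx : G.dist x (g • x) = ℓ) (hmin : ∀ y : V, ℓ ≤ G.dist y (g • y)) :
    ∀ n : ℕ, G.dist x (g ^ n • x) = n * ℓ := by
  have key : ∀ n : ℕ, G.dist x (g ^ n • x) = n * ℓ ∧
      G.dist x (g ^ (n + 1) • x) = (n + 1) * ℓ := by
    intro n
    induction n with
    | zero => constructor <;> simp [hx]
    | succ n ih =>
      obtain ⟨ihn, ihn1⟩ := ih
      refine ⟨ihn1, ?_⟩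
      set a := x with ha
      set bp := g ^ n • x with hbp
      set b := g ^ (n + 1) • x with hb
      set cc := g ^ (n + 1 + 1) • x with hcc
      have hsm1 : b = g ^ n • (g • x) := by rw [hb, pow_succ, mul_smul]
      have hsm2 : cc = g ^ n • (g • (g • x)) := by
        rw [hcc, pow_succ, mul_smul, pow_succ, mul_smul]
      have hdbc : G.dist b cc = ℓ := by
        rw [hsm1, hsm2, dist_smul_eq hact, dist_smul_eq hact]
        exact hx
      have hdbpb : G.dist bp b = ℓ := by
        rw [hbp, hsm1, dist_smul_eq hact]
        exact hx
      have hdbpc : G.dist bp cc = 2 * ℓ := by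
        rw [hbp, hsm2, dist_smul_eq hact]
        exact serre_double hT hact hhyp hx hmin
      have hbtw : GBtw G a bp b := by
        unfold GBtw
        rw [ihn, ihn1, hdbpb]
        ring
      obtain ⟨m, hm1, hm2, hm3⟩ := tree_median hT a b cc
      have ht : G.dist b m ≤ ℓ := by
        unfold GBtw at hm2; omega
      have e2 : G.dist b bp = ℓ := by rw [gdist_comm G b bp]; exact hdbpb
      have hcmp := tree_cmp hT (GBtw.symm hm1) (GBtw.symm hbtw) (by omega)
      have hdmbp : G.dist m bp = ℓ - G.dist b m := by
        unfold GBtw at hcmp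
        omega
      have htri : G.dist bp cc ≤ G.dist bp m + G.dist m cc := tree_dist_triangle hT _ _ _
      have hdmc : G.dist m cc = ℓ - G.dist b m := by
        unfold GBtw at hm2; omega
      have e1 : G.dist bp m = G.dist m bp := gdist_comm G bp m
      have ht0 : G.dist b m = 0 := by omega
      have hmb : b = m := tree_dist_eq_zero hT ht0
      rw [← hmb] at hm3
      unfold GBtw at hm3
      rw [ihn1, hdbc] at hm3
      rw [← hm3]
      ring
  intro n
  exact (key n).1
end ExistAxis


section ExistAxis2
open SimpleGraph
variable {V : Type*} {G : SimpleGraph V} {Γ : Type*} [Group Γ] [MulAction Γ V]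

lemma exists_min_disp (g : Γ) (x : V) :
    ∃ x₀ : V, ∀ y : V, G.dist x₀ (g • x₀) ≤ G.dist y (g • y) := by
  have hne : (Set.range fun y : V => G.dist y (g • y)).Nonempty := ⟨_, x, rfl⟩
  obtain ⟨x₀, hx₀⟩ := Nat.sInf_mem hne
  exact ⟨x₀, fun y => le_of_eq_of_le hx₀ (Nat.sInf_le ⟨y, rfl⟩)⟩

variable (hT : G.IsTree) (hact : IsGraphAction G Γ)
include hT hact

lemma serre_zdist {g : Γ} (hhyp : IsHyperbolicAut G g) {x : V} {ℓ : ℕ}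
    (hx : G.dist x (g • x) = ℓ) (hmin : ∀ y : V, ℓ ≤ G.dist y (g • y)) :
    ∀ a b : ℤ, (G.dist (g ^ a • x) (g ^ b • x) : ℤ) = (ℓ : ℤ) * |b - a| := by
  have hnat : ∀ n : ℕ, G.dist x (g ^ (n : ℤ) • x) = n * ℓ := by
    intro n
    rw [zpow_natCast]
    exact serre_orbit hT hact hhyp hx hmin n
  have hred : ∀ a b : ℤ, G.dist (g ^ a • x) (g ^ b • x) = G.dist x (g ^ (b - a) • x) := by
    intro a b
    have h := dist_smul_eq hact (g ^ (-a)) (g ^ a • x) (g ^ b • x)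
    rw [smul_smul, smul_smul, ← zpow_add, ← zpow_add] at h
    simp only [neg_add_cancel, zpow_zero, one_smul] at h
    rw [← h]
    congr 2
    ring
  intro a b
  rw [hred a b]
  rcases le_total a b with hab | hab
  · have h0 : 0 ≤ b - a := by omega
    have he : g ^ (b - a) = g ^ (((b - a).toNat : ℤ)) := by rw [Int.toNat_of_nonneg h0]
    rw [he, hnat, abs_of_nonneg h0]
    push_cast
    rw [Int.toNat_of_nonneg h0]
    ring
  · have h0 : 0 ≤ a - b := by omega
    have hsw : G.dist x (g ^ (b - a) • x) = G.dist x (g ^ (a - b) • x) := by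
      have h := dist_smul_eq hact (g ^ (a - b)) x (g ^ (b - a) • x)
      rw [smul_smul, ← zpow_add] at h
      simp only [show a - b + (b - a) = 0 by ring, zpow_zero, one_smul] at h
      rw [← h, gdist_comm]
    rw [hsw]
    have he : g ^ (a - b) = g ^ (((a - b).toNat : ℤ)) := by rw [Int.toNat_of_nonneg h0]
    rw [he, hnat, abs_of_nonpos (by omega)]
    push_cast
    rw [Int.toNat_of_nonneg h0]
    ring

/-- Existence of an axis line for a hyperbolic automorphism. -/
theorem exists_axisLine {g : Γ} (hhyp : IsHyperbolicAut G g) (x : V) :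
    ∃ (φ : ℤ → V) (c : ℕ), IsAxisLine G g φ c := by
  obtain ⟨x₀, hmin₀⟩ := exists_min_disp g x
  set ℓ : ℕ := G.dist x₀ (g • x₀) with hℓ
  have hmin : ∀ y : V, ℓ ≤ G.dist y (g • y) := hmin₀
  have hx : G.dist x₀ (g • x₀) = ℓ := rfl
  have hl1 : 1 ≤ ℓ := by
    rcases Nat.eq_zero_or_pos ℓ with h0 | h1
    · exact absurd ⟨x₀, (tree_dist_eq_zero hT (by rw [hx, h0])).symm⟩ hhyp.1
    · exact h1
  obtain ⟨W, hWd⟩ := tree_geo_exists hT x₀ (g • x₀)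
  have hW : W.length = ℓ := by rw [hWd, hx]
  have hℓZ : (0 : ℤ) < (ℓ : ℤ) := by exact_mod_cast hl1
  have hℓne : (ℓ : ℤ) ≠ 0 := by omega
  have dgv : ∀ a b : ℕ, a ≤ b → b ≤ ℓ → G.dist (W.getVert a) (W.getVert b) = b - a := by
    intro a b h1 h2
    exact tree_geo_getVert_pair hT W (by rw [hWd]) h1 (by omega)
  have hgv0 : W.getVert 0 = x₀ := SimpleGraph.Walk.getVert_zero W
  have hgvl : W.getVert ℓ = g • x₀ := by rw [← hW]; exact SimpleGraph.Walk.getVert_length W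
  have dgvl : ∀ a : ℕ, a ≤ ℓ → G.dist (W.getVert a) (g • x₀) = ℓ - a := by
    intro a ha
    have h := dgv a ℓ ha le_rfl
    rw [hgvl] at h
    exact h
  have dgv0 : ∀ b : ℕ, b ≤ ℓ → G.dist x₀ (W.getVert b) = b := by
    intro b hb
    have h := dgv 0 b (by omega) hb
    rw [hgv0] at h
    simpa using h
  have zdist := serre_zdist hT hact hhyp hx hmin
  refine ⟨fun i => g ^ (i / (ℓ : ℤ)) • W.getVert (i % (ℓ : ℤ)).toNat, ℓ, hl1, ?_, ?_⟩
  · -- IsZLine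
    intro i j hij
    simp only []
    set qi := i / (ℓ : ℤ) with hqi
    set qj := j / (ℓ : ℤ) with hqj
    set riZ := i % (ℓ : ℤ) with hriZ
    set rjZ := j % (ℓ : ℤ) with hrjZ
    have hi : (ℓ : ℤ) * qi + riZ = i := Int.mul_ediv_add_emod i (ℓ : ℤ)
    have hj : (ℓ : ℤ) * qj + rjZ = j := Int.mul_ediv_add_emod j (ℓ : ℤ)
    have hri0 : 0 ≤ riZ := Int.emod_nonneg i hℓne
    have hri1 : riZ < (ℓ : ℤ) := Int.emod_lt_of_pos i hℓZ
    have hrj0 : 0 ≤ rjZ := Int.emod_nonneg j hℓne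
    have hrj1 : rjZ < (ℓ : ℤ) := Int.emod_lt_of_pos j hℓZ
    have hriT : ((riZ.toNat : ℤ)) = riZ := Int.toNat_of_nonneg hri0
    have hrjT : ((rjZ.toNat : ℤ)) = rjZ := Int.toNat_of_nonneg hrj0
    have hqij : qi ≤ qj := Int.ediv_le_ediv hℓZ hij
    rcases eq_or_lt_of_le hqij with hq | hq
    · -- same segment
      rw [← hq] at hj ⊢
      rw [dist_smul_eq hact]
      have hrij : riZ.toNat ≤ rjZ.toNat := by omega
      rw [dgv riZ.toNat rjZ.toNat hrij (by omega)]
      omega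
    · -- different segments
      have dQ1 : (G.dist (g ^ qi • W.getVert riZ.toNat) (g ^ (qi + 1) • x₀) : ℤ)
          = (ℓ : ℤ) - riZ := by
        have e1 : g ^ (qi + 1) • x₀ = g ^ qi • (g • x₀) := by
          rw [zpow_add_one, mul_smul]
        rw [e1, dist_smul_eq hact, dgvl riZ.toNat (by omega)]
        omega
      have dQ0 : (G.dist (g ^ qj • x₀) (g ^ qj • W.getVert rjZ.toNat) : ℤ) = rjZ := by
        rw [dist_smul_eq hact, dgv0 rjZ.toNat (by omega)]
        omega
      have dQ0i : (G.dist (g ^ qi • x₀) (g ^ qi • W.getVert riZ.toNat) : ℤ) = riZ := by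
        rw [dist_smul_eq hact, dgv0 riZ.toNat (by omega)]
        omega
      have dQ2 : (G.dist (g ^ qj • W.getVert rjZ.toNat) (g ^ (qj + 1) • x₀) : ℤ)
          = (ℓ : ℤ) - rjZ := by
        have e1 : g ^ (qj + 1) • x₀ = g ^ qj • (g • x₀) := by
          rw [zpow_add_one, mul_smul]
        rw [e1, dist_smul_eq hact, dgvl rjZ.toNat (by omega)]
        omega
      have dXX : (G.dist (g ^ (qi + 1) • x₀) (g ^ qj • x₀) : ℤ)
          = (ℓ : ℤ) * (qj - qi - 1) := by
        rw [zdist (qi + 1) qj, abs_of_nonneg (by omega)]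
        ring
      have dXX2 : (G.dist (g ^ qi • x₀) (g ^ (qj + 1) • x₀) : ℤ)
          = (ℓ : ℤ) * (qj + 1 - qi) := by
        rw [zdist qi (qj + 1), abs_of_nonneg (by omega)]
      have T1 := tree_dist_triangle hT (g ^ qi • W.getVert riZ.toNat)
        (g ^ (qi + 1) • x₀) (g ^ qj • W.getVert rjZ.toNat)
      have T2 := tree_dist_triangle hT (g ^ (qi + 1) • x₀)
        (g ^ qj • x₀) (g ^ qj • W.getVert rjZ.toNat)
      have T3 := tree_dist_triangle hT (g ^ qi • x₀)
        (g ^ qi • W.getVert riZ.toNat) (g ^ (qj + 1) • x₀)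
      have T4 := tree_dist_triangle hT (g ^ qi • W.getVert riZ.toNat)
        (g ^ qj • W.getVert rjZ.toNat) (g ^ (qj + 1) • x₀)
      have T1Z : (G.dist (g ^ qi • W.getVert riZ.toNat) (g ^ qj • W.getVert rjZ.toNat) : ℤ)
          ≤ (G.dist (g ^ qi • W.getVert riZ.toNat) (g ^ (qi + 1) • x₀) : ℤ)
            + (G.dist (g ^ (qi + 1) • x₀) (g ^ qj • W.getVert rjZ.toNat) : ℤ) := by
        exact_mod_cast T1
      have T2Z : (G.dist (g ^ (qi + 1) • x₀) (g ^ qj • W.getVert rjZ.toNat) : ℤ)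
          ≤ (G.dist (g ^ (qi + 1) • x₀) (g ^ qj • x₀) : ℤ)
            + (G.dist (g ^ qj • x₀) (g ^ qj • W.getVert rjZ.toNat) : ℤ) := by
        exact_mod_cast T2
      have T3Z : (G.dist (g ^ qi • x₀) (g ^ (qj + 1) • x₀) : ℤ)
          ≤ (G.dist (g ^ qi • x₀) (g ^ qi • W.getVert riZ.toNat) : ℤ)
            + (G.dist (g ^ qi • W.getVert riZ.toNat) (g ^ (qj + 1) • x₀) : ℤ) := by
        exact_mod_cast T3
      have T4Z : (G.dist (g ^ qi • W.getVert riZ.toNat) (g ^ (qj + 1) • x₀) : ℤ)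
          ≤ (G.dist (g ^ qi • W.getVert riZ.toNat) (g ^ qj • W.getVert rjZ.toNat) : ℤ)
            + (G.dist (g ^ qj • W.getVert rjZ.toNat) (g ^ (qj + 1) • x₀) : ℤ) := by
        exact_mod_cast T4
      rw [dQ1] at T1Z
      rw [dXX, dQ0] at T2Z
      rw [dQ0i, dXX2] at T3Z
      rw [dQ2] at T4Z
      have expand : (ℓ : ℤ) * (qj - qi - 1) = (ℓ:ℤ) * qj - (ℓ:ℤ) * qi - (ℓ:ℤ) := by ring
      have expand2 : (ℓ : ℤ) * (qj + 1 - qi) = (ℓ:ℤ) * qj - (ℓ:ℤ) * qi + (ℓ:ℤ) := by ring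
      rw [expand] at T2Z
      rw [expand2] at T3Z
      linarith
  · -- translation
    intro i
    simp only []
    have e1 : (i + (ℓ : ℤ)) / (ℓ : ℤ) = i / (ℓ : ℤ) + 1 := by
      have h := Int.add_mul_ediv_right i 1 hℓne
      simpa using h
    have e2 : (i + (ℓ : ℤ)) % (ℓ : ℤ) = i % (ℓ : ℤ) := by
      have h := Int.add_mul_emod_self_right (a := i) (b := 1) (c := (ℓ : ℤ))
      simpa using h
    rw [e1, e2, zpow_add_one]
    rw [show g ^ (i / (ℓ:ℤ)) * g = g * g ^ (i / (ℓ:ℤ)) from ((Commute.refl g).zpow_left _).eq]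
    rw [mul_smul]

end ExistAxis2


section Ends
open SimpleGraph
variable {V : Type*} {G : SimpleGraph V} {Γ : Type*} [Group Γ] [MulAction Γ V]

variable (hT : G.IsTree) (hact : IsGraphAction G Γ)

include hT in
/-- a line meeting a convex set in an infinite set eventually has a tail inside it -/
lemma line_tail {φ : ℤ → V} (hφ : IsZLine G φ) {S : Set V} (hconv : GConvex G S)
    (hinf : (Set.range φ ∩ S).Infinite) :
    ∃ ε : ℤ, (ε = 1 ∨ ε = -1) ∧ ∃ N : ℕ, ∀ n : ℕ, N ≤ n → φ (ε * n) ∈ S := by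
  classical
  set T : Set ℤ := {i : ℤ | φ i ∈ S} with hTdef
  have hTinf : T.Infinite := by
    have h1 : (Set.range φ ∩ S).Infinite := hinf
    have h2 := h1.preimage (Set.inter_subset_left)
    refine h2.mono ?_
    intro i hi
    exact hi.2
  have swallow : ∀ i j k : ℤ, i ∈ T → j ∈ T → i ≤ k → k ≤ j → k ∈ T := by
    intro i j k hi hj hik hkj
    have hbtw : GBtw G (φ i) (φ k) (φ j) := by
      unfold GBtw
      have d1 := hφ i k hik
      have d2 := hφ k j hkj
      have d3 := hφ i j (by omega)
      omega
    exact hconv (φ i) hi (φ j) hj (φ k) hbtw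
  by_cases hup : ∀ b : ℤ, ∃ i ∈ T, b < i
  · obtain ⟨i₀, hi₀⟩ := hTinf.nonempty
    refine ⟨1, Or.inl rfl, i₀.toNat, fun n hn => ?_⟩
    obtain ⟨j, hj, hbj⟩ := hup n
    have h1 : i₀ ≤ (n : ℤ) := by omega
    rw [one_mul]
    exact swallow i₀ j n hi₀ hj h1 (by omega)
  · push_neg at hup
    obtain ⟨b, hb⟩ := hup
    by_cases hdown : ∀ a : ℤ, ∃ i ∈ T, i < a
    · obtain ⟨i₀, hi₀⟩ := hTinf.nonempty
      refine ⟨-1, Or.inr rfl, (-i₀).toNat, fun n hn => ?_⟩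
      obtain ⟨j, hj, hbj⟩ := hdown (-(n : ℤ))
      have h1 : -(1 * (n : ℤ)) ≤ i₀ := by omega
      refine swallow j i₀ (-1 * n) hj hi₀ (by omega) (by omega)
    · push_neg at hdown
      obtain ⟨a, ha⟩ := hdown
      exfalso
      refine hTinf (Set.Finite.subset (Set.finite_Icc a b) ?_)
      intro i hi
      exact Set.mem_Icc.mpr ⟨ha i hi, hb i hi⟩

include hT in
/-- two lines meeting infinitely share a parametrized ray -/
lemma lines_meet {φ ψ : ℤ → V} (hφ : IsZLine G φ) (hψ : IsZLine G ψ)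
    (hinf : (Set.range φ ∩ Set.range ψ).Infinite) :
    ∃ ε σ c : ℤ, (ε = 1 ∨ ε = -1) ∧ (σ = 1 ∨ σ = -1) ∧
      ∃ N : ℕ, ∀ n : ℕ, N ≤ n → φ (ε * n) = ψ (σ * n + c) := by
  obtain ⟨ε, hε, N, hN⟩ := line_tail hT hφ (tree_line_gconvex hT hψ) hinf
  have hc : ∀ n : ℕ, ∃ t : ℤ, N ≤ n → φ (ε * n) = ψ t := by
    intro n
    by_cases h' : N ≤ n
    · obtain ⟨t, ht⟩ := hN n h'
      exact ⟨t, fun _ => ht.symm⟩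
    · exact ⟨0, fun hn => absurd hn h'⟩
  choose s hs using hc
  have hεabs : |ε| = 1 := by rcases hε with rfl | rfl <;> simp
  have step : ∀ n : ℕ, N ≤ n → s (n + 1) - s n = 1 ∨ s (n + 1) - s n = -1 := by
    intro n hn
    have d1 : (G.dist (ψ (s n)) (ψ (s (n + 1))) : ℤ) = |s (n + 1) - s n| := hψ.dist_eq _ _
    have d2 : (G.dist (φ (ε * n)) (φ (ε * (n + 1))) : ℤ) = |ε * (n + 1) - ε * n| :=
      hφ.dist_eq _ _
    rw [← hs n hn, ← hs (n + 1) (by omega)] at d1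
    have e1 : |ε * ((n : ℤ) + 1) - ε * n| = |ε| := by
      rw [show ε * ((n : ℤ) + 1) - ε * n = ε by ring]
    push_cast at d2
    rw [e1, hεabs] at d2
    have := d1.symm.trans d2
    rcases (abs_eq (by norm_num : (0:ℤ) ≤ 1)).mp this with h | h
    · exact Or.inl h
    · exact Or.inr h
  have step2 : ∀ n : ℕ, N ≤ n → s (n + 2) - s n = 2 ∨ s (n + 2) - s n = -2 := by
    intro n hn
    have d1 : (G.dist (ψ (s n)) (ψ (s (n + 2))) : ℤ) = |s (n + 2) - s n| := hψ.dist_eq _ _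
    have d2 : (G.dist (φ (ε * n)) (φ (ε * (n + 2))) : ℤ) = |ε * (n + 2) - ε * n| :=
      hφ.dist_eq _ _
    rw [← hs n hn, ← hs (n + 2) (by omega)] at d1
    have e1 : |ε * ((n : ℤ) + 2) - ε * n| = |ε| * 2 := by
      rw [show ε * ((n : ℤ) + 2) - ε * n = ε * 2 by ring, abs_mul]
      norm_num
    push_cast at d2
    rw [e1, hεabs] at d2
    norm_num at d2
    have := d1.symm.trans d2
    rcases (abs_eq (by norm_num : (0:ℤ) ≤ 2)).mp this with h | h
    · exact Or.inl h
    · exact Or.inr h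
  set σ : ℤ := s (N + 1) - s N with hσdef
  have hσ : σ = 1 ∨ σ = -1 := step N le_rfl
  have affine : ∀ n : ℕ, s (N + n) = s N + σ * n ∧ s (N + n + 1) = s N + σ * (n + 1) := by
    intro n
    induction n with
    | zero => constructor <;> simp [hσdef]
    | succ n ih =>
      obtain ⟨ih1, ih2⟩ := ih
      have h1 := step (N + n + 1) (by omega)
      have h2 := step2 (N + n) (by omega)
      rw [show N + n + 1 + 1 = N + n + 2 by ring] at h1
      have hstep0 : s (N + n + 1) - s (N + n) = σ := by
        rw [ih2, ih1]
        push_cast; ring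
      constructor
      · rw [show N + (n + 1) = N + n + 1 by ring, ih2]
        push_cast; ring
      · rw [show N + (n + 1) + 1 = N + n + 2 by ring]
        have hnext : s (N + n + 2) = s (N + n + 1) + σ := by
          rcases hσ with hs1 | hs1 <;> rcases h1 with h | h <;> rcases h2 with h' | h' <;>
            omega
        rw [hnext, ih2]
        push_cast; ring
  refine ⟨ε, σ, s N - σ * N, hε, hσ, N, fun n hn => ?_⟩
  rw [hs n hn]
  congr 1
  have := (affine (n - N)).1
  rw [show N + (n - N) = n by omega] at this
  rw [this, Nat.cast_sub hn]
  ring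

include hT hact in
/-- no hyperbolic element can shift a ray of a line transverse to its axis -/
lemma no_shifted_ray {g : Γ} {φE : ℤ → V} {c : ℕ} (hal : IsAxisLine G g φE c)
    {χ : ℤ → V} (hχ : IsZLine G χ) (hfin : (Set.range χ ∩ Set.range φE).Finite)
    {σ cc cc' : ℤ} (hσ : σ = 1 ∨ σ = -1) {N : ℕ}
    (hsh : ∀ n : ℕ, N ≤ n → g • χ (σ * n + cc') = χ (σ * n + cc)) : False := by
  set r : ℤ → V := fun i => χ (σ * i + cc') with hrdef
  have hr : IsZLine G r := by
    intro i j hij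
    simp only [hrdef]
    rcases hσ with rfl | rfl
    · have := hχ (1 * i + cc') (1 * j + cc') (by omega)
      rw [this]; ring
    · have := hχ ((-1) * j + cc') ((-1) * i + cc') (by omega)
      rw [gdist_comm G (χ ((-1) * i + cc')) (χ ((-1) * j + cc')), this]
      ring
  set t : ℤ := σ * (cc - cc') with ht
  have hσσ : σ * σ = 1 := by rcases hσ with rfl | rfl <;> norm_num
  have hrt : ∀ n : ℕ, N ≤ n → g • r n = r ((n : ℤ) + t) := by
    intro n hn
    have e1 : r ((n : ℤ) + t) = χ (σ * n + cc) := by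
      simp only [hrdef]
      congr 1
      rw [ht]
      have : σ * ((n:ℤ) + σ * (cc - cc')) = σ * n + (σ * σ) * (cc - cc') := by ring
      rw [this, hσσ]
      ring
    rw [e1]
    exact hsh n hn
  by_cases ht0 : t = 0
  · have h := hrt N le_rfl
    rw [ht0, add_zero] at h
    have h2 := hal.le_disp hT hact (r N)
    rw [h, SimpleGraph.dist_self] at h2
    have := hal.one_le
    omega
  · -- constant displacement |t| along the ray
    have hD : ∀ n : ℕ, N ≤ n → (G.dist (r n) (g • r n) : ℤ) = |t| := by
      intro n hn
      rw [hrt n hn]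
      exact hr.dist_eq _ _  |>.trans (by congr 1; ring)
    have hEne : (Set.range φE).Nonempty := ⟨φE 0, 0, rfl⟩
    have hclose : ∀ n : ℕ, ∃ p ∈ Set.range φE,
        (∀ z ∈ Set.range φE, G.dist (r n) p ≤ G.dist (r n) z) := by
      intro n
      exact exists_closest _ hEne _
    choose p hpmem hpmin using hclose
    have hform : ∀ n : ℕ, N ≤ n →
        G.dist (r n) (g • r n) = c + 2 * G.dist (r n) (p n) := by
      intro n hn
      exact hal.formula hT hact (r n) (p n) (hpmem n) (hpmin n)
    have hconst : ∀ n : ℕ, N ≤ n → G.dist (r n) (p n) = G.dist (r N) (p N) := by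
      intro n hn
      have h1 := hform n hn
      have h2 := hform N le_rfl
      have h3 := hD n hn
      have h4 := hD N le_rfl
      omega
    by_cases hs0 : G.dist (r N) (p N) = 0
    · -- tail of χ inside range φE : contradiction with finiteness
      have hInj : Function.Injective (fun k : ℕ => r (N + k)) := by
        intro a b hab
        have := hr.injective hab
        omega
      have hMem : ∀ k : ℕ, r (N + k) ∈ Set.range χ ∩ Set.range φE := by
        intro k
        constructor
        · exact ⟨σ * ((N : ℤ) + k) + cc', rfl⟩
        · have hk := hconst (N + k) (by omega)
          rw [hs0] at hk
          have : r (N + k) = p (N + k) := tree_dist_eq_zero hT (by push_cast at hk ⊢; omega)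
          rw [this]
          exact hpmem _
      exact (Set.infinite_of_injective_forall_mem hInj hMem) hfin
    · -- adjacent points at equal positive distance : contradiction
      have hadj : G.Adj (r N) (r (N + 1)) := by
        have := hr N (N + 1) (by omega)
        have h1 : G.dist (r N) (r (N + 1)) = 1 := by push_cast at this; omega
        exact SimpleGraph.dist_eq_one_iff_adj.mp h1
      have hc1 := hconst (N + 1) (by omega)
      exact tree_adj_dist_convex hT (tree_line_gconvex hT hal.line) hadj
        (hpmem N) (hpmin N) (hpmem (N + 1)) (hpmin (N + 1))
        (by omega) (by push_cast at hc1 ⊢; omega)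

include hT hact in
/-- only finitely many powers translate a transverse line to meet it infinitely -/
lemma bad_finite {g : Γ} {φE : ℤ → V} {cE : ℕ} (halE : IsAxisLine G g φE cE)
    {φA : ℤ → V} (hφA : IsZLine G φA)
    (hfin : (Set.range φA ∩ Set.range φE).Finite) :
    {k : ℕ | 1 ≤ k ∧ (Set.range φA ∩ (fun v => g ^ k • v) '' Set.range φA).Infinite}.Finite := by
  classical
  set Bad := {k : ℕ | 1 ≤ k ∧
    (Set.range φA ∩ (fun v => g ^ k • v) '' Set.range φA).Infinite} with hBad
  have hψ : ∀ k : ℕ, IsZLine G (fun i => g ^ k • φA i) := by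
    intro k i j hij
    rw [dist_smul_eq hact]
    exact hφA i j hij
  have hrange : ∀ k : ℕ, (fun v => g ^ k • v) '' Set.range φA
      = Set.range (fun i => g ^ k • φA i) := by
    intro k
    rw [← Set.range_comp]
    rfl
  have H : ∀ k ∈ Bad, ∃ ε σ c : ℤ, (ε = 1 ∨ ε = -1) ∧ (σ = 1 ∨ σ = -1) ∧
      ∃ N : ℕ, ∀ n : ℕ, N ≤ n → φA (ε * n) = g ^ k • φA (σ * n + c) := by
    intro k hk
    have hinf : (Set.range φA ∩ Set.range (fun i => g ^ k • φA i)).Infinite := by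
      rw [← hrange k]
      exact hk.2
    obtain ⟨ε, σ, c, hε, hσ, N, hN⟩ := lines_meet hT hφA (hψ k) hinf
    exact ⟨ε, σ, c, hε, hσ, N, hN⟩
  choose ε σ cc hε hσ NN hh using H
  have key : ∀ (k : ℕ) (hk : k ∈ Bad) (k' : ℕ) (hk' : k' ∈ Bad), k < k' →
      ε k hk = ε k' hk' → σ k hk = σ k' hk' → False := by
    intro k hk k' hk' hlt heq hseq
    set m : ℕ := k' - k with hm
    have hm1 : 1 ≤ m := by omega
    have halm : IsAxisLine G (g ^ m) φE (m * cE) := halE.pow hm1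
    set N2 : ℕ := max (NN k hk) (NN k' hk') with hN2
    have hsh : ∀ n : ℕ, N2 ≤ n →
        (g ^ m) • φA (σ k hk * n + cc k' hk') = φA (σ k hk * n + cc k hk) := by
      intro n hn
      have h1 := hh k hk n (by omega)
      have h2 := hh k' hk' n (by omega)
      rw [← heq, ← hseq] at h2
      rw [h1] at h2
      -- h2 : g ^ k • φA (σ n + cc k) = g ^ k' • φA (σ n + cc k')
      have hp : g ^ k' = g ^ k * g ^ m := by
        rw [← pow_add]
        congr 1
        omega
      rw [hp, mul_smul] at h2
      have := smul_left_cancel (g ^ k) h2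
      exact this.symm
    exact no_shifted_ray hT hact halm hφA hfin (hσ k hk) hsh
  classical
  set F : ℕ → ℤ × ℤ := fun k => if hk : k ∈ Bad then (ε k hk, σ k hk) else (0, 0) with hF
  have hinj : Set.InjOn F Bad := by
    intro k hk k' hk' hFeq
    by_contra hne
    simp only [hF, dif_pos hk, dif_pos hk', Prod.mk.injEq] at hFeq
    rcases Nat.lt_or_ge k k' with h | h
    · exact key k hk k' hk' h hFeq.1 hFeq.2
    · have h' : k' < k := by omega
      exact key k' hk' k hk h' hFeq.1.symm hFeq.2.symm
  have himg : (F '' Bad).Finite := by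
    apply Set.Finite.subset (Set.Finite.prod
      (Set.finite_Icc (-1 : ℤ) 1) (Set.finite_Icc (-1 : ℤ) 1))
    rintro _ ⟨k, hk, rfl⟩
    simp only [hF, dif_pos hk, Set.mem_prod, Set.mem_Icc]
    constructor
    · rcases hε k hk with h | h <;> rw [h] <;> omega
    · rcases hσ k hk with h | h <;> rw [h] <;> omega
  exact Set.Finite.of_finite_image himg hinj
end Ends


section Assembly
open SimpleGraph
variable {V : Type*} {G : SimpleGraph V} {Γ : Type*} [Group Γ] [MulAction Γ V]

lemma tails_inter_infinite {φ : ℤ → V} (hφ : IsZLine G φ) {ε : ℤ} (hε : ε = 1 ∨ ε = -1)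
    {S T : Set V} {N1 N2 : ℕ} (h1 : ∀ n : ℕ, N1 ≤ n → φ (ε * n) ∈ S)
    (h2 : ∀ n : ℕ, N2 ≤ n → φ (ε * n) ∈ T) : (S ∩ T).Infinite := by
  apply Set.infinite_of_injective_forall_mem
    (f := fun k : ℕ => φ (ε * ((max N1 N2 + k : ℕ) : ℤ)))
  · intro a b hab
    have h := hφ.injective hab
    rcases hε with rfl | rfl <;> omega
  · intro k
    exact ⟨h1 _ (by omega), h2 _ (by omega)⟩

lemma range_smul_eq (g : Γ) (φ : ℤ → V) :
    (fun v => g • v) '' Set.range φ = Set.range (fun i => g • φ i) := by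
  rw [← Set.range_comp]
  rfl

variable (hT : G.IsTree) (hact : IsGraphAction G Γ)
include hT hact

/-- Step 1: given a strongly hyperbolic action, every hyperbolic element admits a
transverse hyperbolic element. -/
lemma exists_transverse {γ₀ u w : Γ} (h₀ : IsHyperbolicAut G γ₀)
    (hu : IsHyperbolicAut G u) (hw : IsHyperbolicAut G w)
    (huw : Transverse G u w) {φA : ℤ → V} {cA : ℕ} (halA : IsAxisLine G γ₀ φA cA) :
    ∃ (v : Γ) (φV : ℤ → V) (cV : ℕ), IsAxisLine G v φV cV ∧
      (Set.range φA ∩ Set.range φV).Finite := by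
  classical
  have hx : V := φA 0
  obtain ⟨φU, cU, halU⟩ := exists_axisLine hT hact hu hx
  obtain ⟨φW, cW, halW⟩ := exists_axisLine hT hact hw hx
  have hUW : (Set.range φU ∩ Set.range φW).Finite := by
    rw [← halU.axis_eq hT hact, ← halW.axis_eq hT hact]
    exact huw
  by_cases hAU : (Set.range φA ∩ Set.range φU).Finite
  · exact ⟨u, φU, cU, halU, hAU⟩
  by_cases hAW : (Set.range φA ∩ Set.range φW).Finite
  · exact ⟨w, φW, cW, halW, hAW⟩
  have hAUi : (Set.range φA ∩ Set.range φU).Infinite := hAU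
  have hAWi : (Set.range φA ∩ Set.range φW).Infinite := hAW
  obtain ⟨ε1, hε1, N1, hN1⟩ := line_tail hT halA.line (tree_line_gconvex hT halU.line) hAUi
  obtain ⟨ε2, hε2, N2, hN2⟩ := line_tail hT halA.line (tree_line_gconvex hT halW.line) hAWi
  have hne : ε1 ≠ ε2 := by
    intro he
    rw [← he] at hN2
    exact tails_inter_infinite halA.line hε1 hN1 hN2 hUW
  -- the set of bad conjugating exponents for u by w
  have hBW := bad_finite hT hact halW halU.line hUW
  set BadW := {k : ℕ | 1 ≤ k ∧
    (Set.range φU ∩ (fun v => w ^ k • v) '' Set.range φU).Infinite} with hBadW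
  set Bad2 := {k : ℕ | 1 ≤ k ∧
    (Set.range φA ∩ (fun v => w ^ k • v) '' Set.range φU).Infinite} with hBad2
  have hψ : ∀ k : ℕ, IsZLine G (fun i => w ^ k • φU i) := by
    intro k i j hij
    rw [dist_smul_eq hact]
    exact halU.line i j hij
  have hsub : Bad2 ⊆ BadW := by
    rintro k ⟨hk1, hk2⟩
    have hk2' : (Set.range φA ∩ Set.range (fun i => w ^ k • φU i)).Infinite := by
      rwa [range_smul_eq] at hk2
    obtain ⟨εk, hεk, Nk, hNk⟩ := line_tail hT halA.line
      (tree_line_gconvex hT (hψ k)) hk2'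
    by_cases hcase : εk = ε2
    · -- contradiction with transversality of u and w
      exfalso
      rw [hcase] at hNk
      have hinf2 : ((Set.range (fun i => w ^ k • φU i)) ∩ Set.range φW).Infinite :=
        tails_inter_infinite halA.line hε2 hNk hN2
      -- push forward by (w^k)⁻¹
      have htransk : ∀ i : ℤ, w ^ k • φW i = φW (i + (k * cW : ℕ)) := by
        intro i
        exact (halW.pow hk1).trans i
      have hWinv : ((w ^ k)⁻¹ • ·) '' Set.range φW = Set.range φW := by
        ext z
        constructor
        · rintro ⟨_, ⟨i, rfl⟩, rfl⟩
          refine ⟨i - (k * cW : ℕ), ?_⟩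
          rw [eq_inv_smul_iff, htransk]
          congr 1
          ring
        · rintro ⟨i, rfl⟩
          refine ⟨φW (i + (k * cW : ℕ)), ⟨_, rfl⟩, ?_⟩
          rw [inv_smul_eq_iff, htransk]
      have hUinvim : ((w ^ k)⁻¹ • ·) '' Set.range (fun i => w ^ k • φU i)
          = Set.range φU := by
        ext z
        constructor
        · rintro ⟨_, ⟨i, rfl⟩, rfl⟩
          exact ⟨i, by simp⟩
        · rintro ⟨i, rfl⟩
          exact ⟨w ^ k • φU i, ⟨i, rfl⟩, by simp⟩
      have himg := hinf2.image (Set.injOn_of_injective (MulAction.injective ((w ^ k)⁻¹)))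
      rw [Set.image_inter (MulAction.injective ((w ^ k)⁻¹)), hUinvim, hWinv] at himg
      exact himg hUW
    · -- εk = ε1 : w^k U meets U infinitely
      have hcase1 : εk = ε1 := by
        rcases hεk with rfl | rfl <;> rcases hε1 with h | h <;> rcases hε2 with h' | h' <;>
          omega
      rw [hcase1] at hNk
      refine ⟨hk1, ?_⟩
      have := tails_inter_infinite halA.line hε1 hN1 hNk
      rwa [range_smul_eq]
  have hBad2fin : Bad2.Finite := hBW.subset hsub
  obtain ⟨M, hM⟩ := hBad2fin.bddAbove
  set k0 := M + 1 with hk0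
  have hk0n : k0 ∉ Bad2 := by
    intro hmem
    have := hM hmem
    omega
  have hk01 : 1 ≤ k0 := by omega
  refine ⟨w ^ k0 * u * (w ^ k0)⁻¹, fun i => w ^ k0 • φU i, cU,
    halU.conj (w ^ k0) hact, ?_⟩
  have : ¬ (Set.range φA ∩ (fun v => w ^ k0 • v) '' Set.range φU).Infinite := by
    intro hinf
    exact hk0n ⟨hk01, hinf⟩
  rw [Set.not_infinite] at this
  rwa [range_smul_eq] at this
end Assembly


section FinalProof
open SimpleGraph
variable {V : Type*} {G : SimpleGraph V} {Γ : Type*} [Group Γ] [MulAction Γ V]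

theorem statement9_aux (hT : G.IsTree) (hact : IsGraphAction G Γ)
    (hsh : StronglyHyperbolicTreeAction G Γ)
    (γ₀ : Γ) (h₀ : IsHyperbolicAut G γ₀) :
    ∃ γ : ℕ → Γ, γ 0 = γ₀ ∧ (∀ n : ℕ, IsHyperbolicAut G (γ n)) ∧
      Pairwise fun i j => Transverse G (γ i) (γ j) := by
  classical
  by_cases hfinV : (Set.univ : Set V).Finite
  · refine ⟨fun _ => γ₀, rfl, fun _ => h₀, ?_⟩
    intro i j _
    exact Set.Finite.subset hfinV (Set.subset_univ _)
  · have hVinf : (Set.univ : Set V).Infinite := hfinV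
    have hVne : Nonempty V := by
      obtain ⟨x, -⟩ := hVinf.nonempty
      exact ⟨x⟩
    obtain ⟨u, w, hu, hw, huw⟩ := hsh
    obtain ⟨φA, cA, halA⟩ := exists_axisLine hT hact h₀ (Classical.arbitrary V)
    obtain ⟨v, φV, cV, halV, hAV⟩ := exists_transverse hT hact h₀ hu hw huw halA
    have hBadfin := bad_finite hT hact halV halA.line hAV
    obtain ⟨M, hM⟩ := hBadfin.bddAbove
    set K := M + 1 with hK
    set γ : ℕ → Γ := fun n => v ^ (n * K) * γ₀ * (v ^ (n * K))⁻¹ with hγ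
    have haxis : ∀ n : ℕ, Axis G (γ n) = Set.range (fun i => v ^ (n * K) • φA i) := by
      intro n
      exact (halA.conj (v ^ (n * K)) hact).axis_eq hT hact
    have main : ∀ i j : ℕ, i < j → (Axis G (γ i) ∩ Axis G (γ j)).Finite := by
      intro i j hij
      rw [haxis i, haxis j]
      set m := j - i with hm
      have hm1 : 1 ≤ m := by omega
      have hsplit : (fun t : ℤ => v ^ (j * K) • φA t)
          = fun t : ℤ => v ^ (i * K) • (v ^ (m * K) • φA t) := by
        funext t
        rw [smul_smul, ← pow_add]
        congr 2
        rw [← Nat.add_mul]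
        congr 1
        omega
      have hr1 : Set.range (fun t : ℤ => v ^ (j * K) • φA t)
          = (fun z => v ^ (i * K) • z) '' Set.range (fun t : ℤ => v ^ (m * K) • φA t) := by
        rw [range_smul_eq, hsplit]
      have hr0 : Set.range (fun t : ℤ => v ^ (i * K) • φA t)
          = (fun z => v ^ (i * K) • z) '' Set.range φA := (range_smul_eq _ _).symm
      rw [hr0, hr1, ← Set.image_inter (MulAction.injective _)]
      apply Set.Finite.image
      have hnot : ¬ (Set.range φA ∩ (fun z => v ^ (m * K) • z) '' Set.range φA).Infinite := by
        intro hinf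
        have hKm : K ≤ m * K := Nat.le_mul_of_pos_left K (by omega)
        have hmem : m * K ∈ {k : ℕ | 1 ≤ k ∧
            (Set.range φA ∩ (fun z => v ^ k • z) '' Set.range φA).Infinite} :=
          ⟨by omega, hinf⟩
        have := hM hmem
        omega
      rw [Set.not_infinite] at hnot
      rwa [range_smul_eq] at hnot
    refine ⟨γ, by simp [hγ], ?_, ?_⟩
    · intro n
      exact (halA.conj (v ^ (n * K)) hact).hyperbolic hT hact
    · intro i j hij
      rcases Nat.lt_or_ge i j with h | h
      · exact main i j h
      · have h' : j < i := by omega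
        have hfin := main j i h'
        show (Axis G (γ i) ∩ Axis G (γ j)).Finite
        rw [Set.inter_comm]
        exact hfin
end FinalProof



section Statements

variable {V : Type*}

theorem statement9 (G : SimpleGraph V) (hT : G.IsTree)
    {Γ : Type*} [Group Γ] [MulAction Γ V]
    (hact : IsGraphAction G Γ)
    (hsh : StronglyHyperbolicTreeAction G Γ)
    (γ₀ : Γ) (h₀ : IsHyperbolicAut G γ₀) :
    ∃ γ : ℕ → Γ, γ 0 = γ₀ ∧ (∀ n : ℕ, IsHyperbolicAut G (γ n)) ∧
      Pairwise fun i j => Transverse G (γ i) (γ j) := by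
  exact statement9_aux hT hact hsh γ₀ h₀

end Statements
end

section
/- Let Γ be a group acting by homeomorphisms on a Hausdorff topological space Ω. Assume that the action is strongly faithful, strongly hyperbolic, and minimal. Then Γ is a Powers group. -/
open Filter Set

section HomeoDefs

variable {Γ : Type*} [Group Γ]

/-- Each group element acts continuously (hence, the group acting, by homeomorphisms). -/
def ActsByHomeos (Γ : Type*) [Group Γ] (Ω : Type*) [TopologicalSpace Ω] [MulAction Γ Ω] :
    Prop :=
  ∀ γ : Γ, Continuous fun x : Ω => γ • x

/-- `ω` is a sink of the hyperbolic homeomorphism `γ`: there is a source `α` fixed by `γ`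
such that `γ` is hyperbolic with attracting point `ω` and repelling point `α`. -/
def IsSinkOf {Ω : Type*} [TopologicalSpace Ω] [MulAction Γ Ω] (γ : Γ) (ω : Ω) : Prop :=
  ∃ α : Ω, γ • α = α ∧ γ • ω = ω ∧
    ∀ U ∈ nhds α, ∀ W ∈ nhds ω, ∀ᶠ n : ℕ in Filter.atTop,
      (∀ x : Ω, x ∉ U → γ ^ n • x ∈ W) ∧ (∀ x : Ω, x ∉ W → γ⁻¹ ^ n • x ∈ U)

/-- A hyperbolic homeomorphism. -/
def IsHypHomeo (Ω : Type*) [TopologicalSpace Ω] [MulAction Γ Ω] (γ : Γ) : Prop :=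
  ∃ ω : Ω, IsSinkOf γ ω

/-- Two homeomorphisms are transverse if they have no common fixed point. -/
def TransverseOn (Ω : Type*) [MulAction Γ Ω] (γ δ : Γ) : Prop :=
  ¬ ∃ x : Ω, γ • x = x ∧ δ • x = x

/-- A strongly hyperbolic action by homeomorphisms: there is a pair of transverse hyperbolic
homeomorphisms in the group. -/
def StronglyHypHomeoAction (Γ : Type*) [Group Γ] (Ω : Type*) [TopologicalSpace Ω]
    [MulAction Γ Ω] : Prop :=
  ∃ γ δ : Γ, IsHypHomeo Ω γ ∧ IsHypHomeo Ω δ ∧ TransverseOn Ω γ δ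

/-- The set `L_N` of sinks of hyperbolic elements of a subgroup `N`. -/
def sinkSet (Ω : Type*) [TopologicalSpace Ω] [MulAction Γ Ω] (N : Subgroup Γ) : Set Ω :=
  {ω : Ω | ∃ γ ∈ N, IsSinkOf γ ω}

/-- A strongly faithful action on the subset `S`. -/
def StronglyFaithfulOn (Γ : Type*) [Group Γ] {Ω : Type*} [MulAction Γ Ω] (S : Set Ω) :
    Prop :=
  ∀ F : Finset Γ, (1 : Γ) ∉ F → ∃ ω ∈ S, ∀ γ ∈ F, γ • ω ≠ ω

/-- A minimal action by homeomorphisms: the only invariant closed subsets are trivial. -/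
def MinimalHomeoAction (Γ : Type*) [Group Γ] (Ω : Type*) [TopologicalSpace Ω]
    [MulAction Γ Ω] : Prop :=
  ∀ C : Set Ω, IsClosed C → (∀ γ : Γ, ∀ x ∈ C, γ • x ∈ C) → C = ∅ ∨ C = Set.univ

end HomeoDefs

/-!
Strong faithfulness gives a point `x₀` moved by every element of `F`, hence an open `U ∋ x₀`
with `f • U ∩ U = ∅` for `f ∈ F`. Minimality makes orbits dense, so pushing the fixed points of
one hyperbolic element towards the sink of a transverse one and then into `U` yields a
hyperbolic `g` with both fixed points in `U`. A large power `g^M` then maps `Uᶜ` into `U` under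
all its non-zero powers, and `C = {c | c • x₀ ∈ U}` with the translates `g^(M j)` is the
required Powers partition.
-/

section

variable {Γ : Type*} [Group Γ] {Ω : Type*} [MulAction Γ Ω]

lemma exists_powers_partition {x₀ : Ω} {U : Set Ω} {F : Finset Γ}
    (hF : ∀ f ∈ F, ∀ u ∈ U, f • u ∉ U) {g : Γ}
    (hg : ∀ k : ℤ, k ≠ 0 → ∀ x ∉ U, g ^ k • x ∈ U) (N : ℕ) :
    ∃ (C : Set Γ) (g : Fin N → Γ),
      (∀ f ∈ F, (fun x => f * x) '' C ∩ C = ∅) ∧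
      ∀ j k : Fin N, j ≠ k → (fun x => g j * x) '' Cᶜ ∩ (fun x => g k * x) '' Cᶜ = ∅ := by
  refine ⟨{c | c • x₀ ∈ U}, fun j => g ^ (j : ℤ), fun f hf => ?_, fun j k hjk => ?_⟩
  · refine eq_empty_of_forall_notMem fun _ ⟨⟨c, hc, hfc⟩, hfcU⟩ => ?_
    subst hfc
    exact hF f hf _ hc (by rwa [mem_ofPred_eq, mul_smul] at hfcU)
  · refine eq_empty_of_forall_notMem fun _ ⟨⟨c, hc, hjc⟩, ⟨d, hd, hkd⟩⟩ => ?_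
    have hd_eq : d = g ^ ((j : ℤ) - k) * c := by
      rw [eq_inv_mul_of_mul_eq (hkd.trans hjc.symm)]
      group
    have hjk' : (j : ℤ) - k ≠ 0 := sub_ne_zero.mpr (by exact_mod_cast Fin.val_ne_of_ne hjk)
    exact hd (by rw [mem_ofPred_eq, hd_eq, mul_smul]; exact hg _ hjk' _ hc)

variable [TopologicalSpace Ω]

/-- The body of `IsSinkOf γ ω`, with the source `α` named. -/
def IsSourceSinkPair (γ : Γ) (α ω : Ω) : Prop :=
  γ • α = α ∧ γ • ω = ω ∧
    ∀ U ∈ nhds α, ∀ W ∈ nhds ω, ∀ᶠ n : ℕ in atTop,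
      (∀ x : Ω, x ∉ U → γ ^ n • x ∈ W) ∧ (∀ x : Ω, x ∉ W → γ⁻¹ ^ n • x ∈ U)

lemma IsSourceSinkPair.conj (hcont : ActsByHomeos Γ Ω) {γ : Γ} {α ω : Ω}
    (hp : IsSourceSinkPair γ α ω) (h : Γ) :
    IsSourceSinkPair (h * γ * h⁻¹) (h • α) (h • ω) := by
  obtain ⟨hα, hω, hdyn⟩ := hp
  have conj_smul : ∀ (k : Γ) (y : Ω), (h * k * h⁻¹) • h • y = h • k • y := fun k y => by
    rw [mul_smul, mul_smul, inv_smul_smul]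
  refine ⟨by rw [conj_smul, hα], by rw [conj_smul, hω], fun U hU W hW => ?_⟩
  filter_upwards [hdyn _ ((hcont h).continuousAt.preimage_mem_nhds hU)
    _ ((hcont h).continuousAt.preimage_mem_nhds hW)] with n ⟨hn₁, hn₂⟩
  refine ⟨fun x hx => ?_, fun x hx => ?_⟩
  · rw [← smul_inv_smul h x, conj_pow, conj_smul]
    exact hn₁ _ (by simpa using hx)
  · rw [← smul_inv_smul h x, conj_inv, conj_pow, conj_smul]
    exact hn₂ _ (by simpa using hx)

lemma IsSourceSinkPair.exists_zpow_pow_mem {γ : Γ} {α ω : Ω} (hp : IsSourceSinkPair γ α ω)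
    {U : Set Ω} (hUo : IsOpen U) (hαU : α ∈ U) (hωU : ω ∈ U) :
    ∃ M : ℕ, ∀ k : ℤ, k ≠ 0 → ∀ x ∉ U, (γ ^ M) ^ k • x ∈ U := by
  obtain ⟨M, hM⟩ := eventually_atTop.mp (hp.2.2 U (hUo.mem_nhds hαU) U (hUo.mem_nhds hωU))
  refine ⟨M, fun k hk x hx => ?_⟩
  have hMn : M ≤ M * k.natAbs := Nat.le_mul_of_pos_right M (Int.natAbs_pos.mpr hk)
  rcases Int.natAbs_eq k with hk' | hk' <;> rw [hk']
  · rw [zpow_natCast, ← pow_mul]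
    exact (hM _ hMn).1 x hx
  · rw [zpow_neg, zpow_natCast, ← pow_mul, ← inv_pow]
    exact (hM _ hMn).2 x hx

lemma dense_orbit_of_minimal (hcont : ActsByHomeos Γ Ω) (hmin : MinimalHomeoAction Γ Ω)
    (ω : Ω) : Dense (MulAction.orbit Γ ω) := by
  have hinv : ∀ γ : Γ, ∀ x ∈ closure (MulAction.orbit Γ ω),
      γ • x ∈ closure (MulAction.orbit Γ ω) := fun γ _ hx =>
    MapsTo.closure (fun _ hy => MulAction.mem_orbit_of_mem_orbit γ hy) (hcont γ) hx
  rcases hmin _ isClosed_closure hinv with hempty | huniv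
  · exact absurd (subset_closure (MulAction.mem_orbit_self ω)) (hempty ▸ notMem_empty ω)
  · exact dense_iff_closure_eq.mpr huniv

lemma exists_sourceSinkPair_mem [T2Space Ω] (hcont : ActsByHomeos Γ Ω)
    (hmin : MinimalHomeoAction Γ Ω) {γ δ : Γ} {αγ ωγ αδ ωδ : Ω}
    (hγ : IsSourceSinkPair γ αγ ωγ) (hδ : IsSourceSinkPair δ αδ ωδ) (htr : TransverseOn Ω γ δ)
    {U : Set Ω} (hUo : IsOpen U) (hU : U.Nonempty) :
    ∃ (g : Γ) (α ω : Ω), IsSourceSinkPair g α ω ∧ α ∈ U ∧ ω ∈ U := by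
  obtain ⟨_, ⟨h, rfl⟩, hhU⟩ := (dense_orbit_of_minimal hcont hmin ωγ).exists_mem_open hUo hU
  have hαγ : αγ ∈ ({αδ, ωδ} : Set Ω)ᶜ := by
    rintro (rfl | rfl)
    exacts [htr ⟨_, hγ.1, hδ.1⟩, htr ⟨_, hγ.1, hδ.2.1⟩]
  have hpull : (h • ·) ⁻¹' U ∈ nhds ωγ := (hUo.preimage (hcont h)).mem_nhds hhU
  -- `γ ^ n` moves the fixed points of `δ`, which avoid the source of `γ`, close to the sink `ωγ`.
  obtain ⟨n, hn, -⟩ := (hγ.2.2 _ ((toFinite _).isClosed.isOpen_compl.mem_nhds hαγ) _ hpull).exists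
  refine ⟨_, _, _, hδ.conj hcont (h * γ ^ n), ?_, ?_⟩ <;> rw [mul_smul]
  · exact hn αδ fun hmem => hmem (Or.inl rfl)
  · exact hn ωδ fun hmem => hmem (Or.inr rfl)

lemma exists_isOpen_smul_notMem [T2Space Ω] (hcont : ActsByHomeos Γ Ω) {f : Γ} {x : Ω}
    (hfx : f • x ≠ x) : ∃ U : Set Ω, IsOpen U ∧ x ∈ U ∧ ∀ u ∈ U, f • u ∉ U := by
  obtain ⟨V, W, hVo, hWo, hfxV, hxW, hVW⟩ := t2_separation hfx
  exact ⟨W ∩ (f • ·) ⁻¹' V, hWo.inter (hVo.preimage (hcont f)), ⟨hxW, hfxV⟩,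
    fun u hu hfu => disjoint_left.mp hVW hu.2 hfu.1⟩

lemma exists_isOpen_forall_smul_notMem [T2Space Ω] (hcont : ActsByHomeos Γ Ω) {F : Finset Γ}
    {x : Ω} (hF : ∀ f ∈ F, f • x ≠ x) :
    ∃ U : Set Ω, IsOpen U ∧ x ∈ U ∧ ∀ f ∈ F, ∀ u ∈ U, f • u ∉ U := by
  choose! V hVo hxV hV using fun f hf => exists_isOpen_smul_notMem hcont (hF f hf)
  refine ⟨⋂ f ∈ F, V f, isOpen_biInter_finset hVo, mem_iInter₂.mpr hxV, fun f hf u hu hfu => ?_⟩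
  exact hV f hf u (mem_iInter₂.mp hu f hf) (mem_iInter₂.mp hfu f hf)

end

theorem statement13 {Γ : Type*} [Group Γ] {Ω : Type*} [TopologicalSpace Ω] [T2Space Ω]
    [MulAction Γ Ω] (hcont : ActsByHomeos Γ Ω)
    (hfaith : StronglyFaithfulOn Γ (Set.univ : Set Ω))
    (hsh : StronglyHypHomeoAction Γ Ω)
    (hmin : MinimalHomeoAction Γ Ω) :
    IsPowersGroup Γ := by
  obtain ⟨γ, δ, ⟨ωγ, αγ, hγ⟩, ⟨ωδ, αδ, hδ⟩, htr⟩ := hsh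
  refine ⟨nontrivial_of_ne γ δ fun heq => htr ⟨αγ, hγ.1, heq ▸ hγ.1⟩, fun F hF1 N _ => ?_⟩
  obtain ⟨x₀, -, hx₀⟩ := hfaith F hF1
  obtain ⟨U, hUo, hx₀U, hFU⟩ := exists_isOpen_forall_smul_notMem hcont hx₀
  obtain ⟨g, α, ω, hg, hαU, hωU⟩ :=
    exists_sourceSinkPair_mem hcont hmin hγ hδ htr hUo ⟨x₀, hx₀U⟩
  obtain ⟨M, hM⟩ := hg.exists_zpow_pow_mem hUo hαU hωU
  exact exists_powers_partition (x₀ := x₀) hFU hM N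
end

section
/- Let m, n be nonzero integers and let Γ = BS(m, n) with stable letter τ; let H denote the image in Γ of the subgroup ⟨b^m⟩, and set K₊ = ⋂_{p≥0} τ^{−p} H τ^{p} and K₋ = ⋂_{p≥0} τ^{p} H τ^{−p}, subgroups of Γ. Then: (a) if |m| = |n|, then K₊ = K₋ = H; (b) if n = ±am for some integer a ≥ 2, then K₊ = {1} and K₋ = H; (c) if m = ±an for some integer a ≥ 2, then K₊ = H and K₋ = {1}; (d) in all other cases, K₊ = K₋ = {1}. -/
open Filter Set

section BSDefs

/-- The single relation `τ⁻¹ b^m τ b^{-n}` of the Baumslag–Solitar group, in the free group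
on two generators (`true ↦ τ`, `false ↦ b`). -/
def BSRels (m n : ℤ) : Set (FreeGroup Bool) :=
  {(FreeGroup.of true)⁻¹ * (FreeGroup.of false) ^ m * FreeGroup.of true *
    ((FreeGroup.of false) ^ n)⁻¹}

/-- The Baumslag–Solitar group `BS(m, n) = ⟨τ, b | τ⁻¹ b^m τ = b^n⟩`. -/
def BS (m n : ℤ) : Type :=
  PresentedGroup (BSRels m n)

instance (m n : ℤ) : Group (BS m n) := by
  delta BS; infer_instance

/-- The generator `τ` of `BS(m, n)` (the stable letter). -/
def BS.τ (m n : ℤ) : BS m n := PresentedGroup.of true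

/-- The generator `b` of `BS(m, n)`. -/
def BS.b (m n : ℤ) : BS m n := PresentedGroup.of false

end BSDefs

/-!
Since `τ⁻¹ b^m τ = b^n`, conjugation by `τ⁻¹` carries `H = ⟨b^m⟩` onto `⟨b^n⟩`. So if `n ∣ m`
then `H ≤ τ⁻¹ H τ`, the subgroups `τ^{-p} H τ^p` increase with `p`, and `K₊ = H`. If `n ∤ m`,
let `BS(m, n)` act on `ℚ` by `b : x ↦ x + 1` and `τ : x ↦ (m/n) x`. Evaluating at `0`, the
relation `b^{mk} = τ^{-p} b^{ms} τ^p` gives `k m^p = s n^p`; so `n^p ∣ k m^p` for every `p`,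
which after dividing out `gcd(m, n)` forces `k = 0`, i.e. `K₊ = 1`. The group `K₋` is handled in
the same way with `m` and `n` exchanged, and the four cases of the theorem just sort `(m, n)` by
which of `m ∣ n`, `n ∣ m` hold.
-/

theorem Int.eq_zero_of_forall_pow_dvd_mul_pow {m n k : ℤ} (hnm : ¬ n ∣ m)
    (h : ∀ p : ℕ, n ^ p ∣ k * m ^ p) : k = 0 := by
  have hgcd : 0 < Int.gcd m n :=
    Int.gcd_pos_iff.2 <| not_and_or.1 <| by rintro ⟨rfl, rfl⟩; exact hnm dvd_rfl
  obtain ⟨g, m', n', hg_pos, hcop, rfl, rfl⟩ := Int.exists_gcd_one' hgcd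
  have hg : (g : ℤ) ≠ 0 := by exact_mod_cast hg_pos.ne'
  have hn' : n'.natAbs ≠ 1 := fun h1 =>
    hnm <| mul_dvd_mul_right (Int.natAbs_dvd_natAbs.1 <| by simp [h1]) _
  by_contra hk
  obtain ⟨p, hp⟩ := Int.finiteMultiplicity_iff.2 ⟨hn', hk⟩
  have hdvd : n' ^ (p + 1) ∣ k * m' ^ (p + 1) := by
    have := h (p + 1)
    rwa [mul_pow, mul_pow, ← mul_assoc, mul_dvd_mul_iff_right (pow_ne_zero _ hg)] at this
  exact hp (((Int.isCoprime_iff_gcd_eq_one.2 hcop).symm.pow).dvd_of_dvd_mul_right hdvd)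

theorem Int.eq_zero_of_forall_exists_eq_div_pow_mul {m n k : ℤ} (hm : m ≠ 0) (hnm : ¬ n ∣ m)
    (h : ∀ p : ℕ, ∃ s : ℤ, (k : ℚ) = ((n : ℚ) / m) ^ p * s) : k = 0 := by
  refine Int.eq_zero_of_forall_pow_dvd_mul_pow hnm fun p => ?_
  obtain ⟨s, hs⟩ := h p
  refine ⟨s, ?_⟩
  have hm' : (m : ℚ) ≠ 0 := by exact_mod_cast hm
  have : (k : ℚ) * m ^ p = n ^ p * s := by
    rw [hs, div_pow]
    field_simp
  exact_mod_cast this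

theorem Int.exists_two_le_eq_mul_or_eq_neg_mul_iff {m n : ℤ} (hm : m ≠ 0) (hn : n ≠ 0) :
    (∃ a : ℤ, 2 ≤ a ∧ (n = a * m ∨ n = -(a * m))) ↔ m ∣ n ∧ ¬ n ∣ m := by
  constructor
  · rintro ⟨a, ha, h⟩
    have habs : n.natAbs = a.natAbs * m.natAbs := by
      rcases h with rfl | rfl <;> simp [Int.natAbs_mul]
    refine ⟨?_, fun hnm => ?_⟩
    · rcases h with rfl | rfl
      · exact Dvd.intro_left a rfl
      · exact (Dvd.intro_left a rfl).neg_right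
    · have := Int.natAbs_le_of_dvd_ne_zero hnm hm
      have : 0 < m.natAbs := Int.natAbs_pos.2 hm
      have : 2 ≤ a.natAbs := by omega
      nlinarith
  · rintro ⟨⟨c, rfl⟩, hnm⟩
    have hc : c ≠ 0 := by rintro rfl; simp at hn
    have hc1 : c ≠ 1 := by rintro rfl; simp at hnm
    have hc1' : c ≠ -1 := by rintro rfl; simp at hnm
    rcases le_or_gt 0 c with h0 | h0
    · exact ⟨c, by omega, Or.inl (mul_comm _ _)⟩
    · exact ⟨-c, by omega, Or.inr (by ring)⟩

theorem Subgroup.iInf_map_conj_pow_eq_self {G : Type*} [Group G] {H : Subgroup G} {g : G}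
    (h : H ≤ H.map (MulAut.conj g).toMonoidHom) :
    ⨅ p : ℕ, H.map (MulAut.conj (g ^ p)).toMonoidHom = H := by
  have hzero : H.map (MulAut.conj (g ^ 0)).toMonoidHom = H := by
    ext; simp
  refine le_antisymm (iInf_le_of_le 0 hzero.le) (le_iInf fun p => ?_)
  induction p with
  | zero => exact hzero.ge
  | succ p ih =>
    have hcomp : (MulAut.conj (g ^ (p + 1))).toMonoidHom =
        (MulAut.conj (g ^ p)).toMonoidHom.comp (MulAut.conj g).toMonoidHom := by
      ext; simp [pow_succ, mul_assoc]
    rw [hcomp, ← Subgroup.map_map]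
    exact ih.trans (Subgroup.map_mono h)

namespace BS

section AffineRepresentation

variable {m n : ℤ} (hm : m ≠ 0) (hn : n ≠ 0)

noncomputable def affineGen : Bool → Equiv.Perm ℚ
  | true => MulAction.toPermHom ℚˣ ℚ (Units.mk0 ((m : ℚ) / n) (by simp [hm, hn]))
  | false => Equiv.addLeft 1

theorem affineGen_true_zpow_apply (t : ℤ) (x : ℚ) :
    (affineGen hm hn true ^ t) x = ((m : ℚ) / n) ^ t * x := by
  rw [affineGen, ← map_zpow]
  simp [Units.smul_def]

theorem affineGen_false_zpow_apply (k : ℤ) (x : ℚ) :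
    (affineGen hm hn false ^ k) x = k + x := by
  simp [affineGen]

noncomputable def affineRep : BS m n →* Equiv.Perm ℚ :=
  PresentedGroup.toGroup (f := affineGen hm hn) <| by
    rintro r rfl
    ext x
    simp only [map_mul, map_inv, map_zpow, FreeGroup.lift_apply_of]
    rw [← zpow_neg, ← zpow_neg_one]
    simp only [Equiv.Perm.mul_apply, affineGen_true_zpow_apply, affineGen_false_zpow_apply,
      Equiv.Perm.one_apply]
    simp only [affineGen, MulAction.toPermHom_apply, MulAction.toPerm_apply, Units.smul_mk0,
      smul_eq_mul]
    field_simp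
    push_cast
    ring

theorem affineRep_b : affineRep hm hn (b m n) = affineGen hm hn false :=
  PresentedGroup.toGroup.of _

theorem affineRep_τ : affineRep hm hn (τ m n) = affineGen hm hn true :=
  PresentedGroup.toGroup.of _

theorem affineRep_b_zpow (k : ℤ) (x : ℚ) : affineRep hm hn (b m n ^ k) x = k + x := by
  rw [map_zpow, affineRep_b, affineGen_false_zpow_apply]

theorem affineRep_τ_zpow (t : ℤ) (x : ℚ) :
    affineRep hm hn (τ m n ^ t) x = ((m : ℚ) / n) ^ t * x := by
  rw [map_zpow, affineRep_τ, affineGen_true_zpow_apply]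

end AffineRepresentation

variable {m n : ℤ}

theorem inv_τ_mul_b_zpow_mul_τ : (τ m n)⁻¹ * (b m n) ^ m * τ m n = (b m n) ^ n := by
  have hrel : PresentedGroup.mk (BSRels m n)
      ((FreeGroup.of true)⁻¹ * (FreeGroup.of false) ^ m * FreeGroup.of true *
        ((FreeGroup.of false) ^ n)⁻¹) = 1 :=
    (QuotientGroup.eq_one_iff _).2 (Subgroup.subset_normalClosure rfl)
  simp only [map_mul, map_inv, map_zpow] at hrel
  exact mul_inv_eq_one.1 hrel

theorem zpowers_le_map_conj_τ_inv (h : n ∣ m) :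
    Subgroup.zpowers (b m n ^ m) ≤
      (Subgroup.zpowers (b m n ^ m)).map (MulAut.conj (τ m n)⁻¹).toMonoidHom := by
  obtain ⟨c, hc⟩ := h
  rw [Subgroup.zpowers_le]
  refine ⟨(b m n ^ m) ^ c, Subgroup.zpow_mem_zpowers _ _, ?_⟩
  rw [MulEquiv.coe_toMonoidHom, map_zpow, MulAut.conj_apply, inv_inv, inv_τ_mul_b_zpow_mul_τ,
    ← zpow_mul, ← hc]

theorem zpowers_le_map_conj_τ (h : m ∣ n) :
    Subgroup.zpowers (b m n ^ m) ≤
      (Subgroup.zpowers (b m n ^ m)).map (MulAut.conj (τ m n)).toMonoidHom := by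
  obtain ⟨c, hc⟩ := h
  rw [Subgroup.zpowers_le]
  refine ⟨(b m n ^ m) ^ c, Subgroup.zpow_mem_zpowers _ _, ?_⟩
  rw [MulEquiv.coe_toMonoidHom, ← zpow_mul, ← hc, ← inv_τ_mul_b_zpow_mul_τ, MulAut.conj_apply]
  group

theorem iInf_map_conj_τ_zpow_neg_eq_self (h : n ∣ m) :
    ⨅ p : ℕ, (Subgroup.zpowers (b m n ^ m)).map
      (MulAut.conj (τ m n ^ (-(p : ℤ)))).toMonoidHom = Subgroup.zpowers (b m n ^ m) := by
  simp only [zpow_neg, zpow_natCast, ← inv_pow]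
  exact Subgroup.iInf_map_conj_pow_eq_self (zpowers_le_map_conj_τ_inv h)

theorem iInf_map_conj_τ_zpow_eq_self (h : m ∣ n) :
    ⨅ p : ℕ, (Subgroup.zpowers (b m n ^ m)).map
      (MulAut.conj (τ m n ^ (p : ℤ))).toMonoidHom = Subgroup.zpowers (b m n ^ m) := by
  simp only [zpow_natCast]
  exact Subgroup.iInf_map_conj_pow_eq_self (zpowers_le_map_conj_τ h)

theorem exists_eq_div_zpow_mul_of_mem_map_conj (hm : m ≠ 0) (hn : n ≠ 0) {k t : ℤ}
    (h : (b m n ^ m) ^ k ∈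
      (Subgroup.zpowers (b m n ^ m)).map (MulAut.conj (τ m n ^ t)).toMonoidHom) :
    ∃ s : ℤ, (k : ℚ) = ((m : ℚ) / n) ^ t * s := by
  obtain ⟨y, hy, hyk⟩ := Subgroup.mem_map.1 h
  obtain ⟨s, rfl⟩ := Subgroup.mem_zpowers_iff.1 hy
  refine ⟨s, ?_⟩
  have h0 := congrArg (fun g => affineRep hm hn g 0) hyk
  simp only [MulEquiv.coe_toMonoidHom, MulAut.conj_apply, ← zpow_neg, ← zpow_mul, map_mul,
    Equiv.Perm.mul_apply, affineRep_b_zpow, affineRep_τ_zpow] at h0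
  have hm' : (m : ℚ) ≠ 0 := by exact_mod_cast hm
  apply mul_left_cancel₀ hm'
  push_cast at h0
  linear_combination -h0

theorem iInf_map_conj_τ_zpow_neg_eq_bot (hm : m ≠ 0) (hn : n ≠ 0) (h : ¬ n ∣ m) :
    ⨅ p : ℕ, (Subgroup.zpowers (b m n ^ m)).map
      (MulAut.conj (τ m n ^ (-(p : ℤ)))).toMonoidHom = ⊥ := by
  refine (Subgroup.eq_bot_iff_forall _).2 fun x hx => ?_
  rw [Subgroup.mem_iInf] at hx
  obtain ⟨k, rfl⟩ := Subgroup.mem_zpowers_iff.1 (by simpa using hx 0)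
  suffices k = 0 by rw [this, zpow_zero]
  refine Int.eq_zero_of_forall_exists_eq_div_pow_mul hm h fun p => ?_
  obtain ⟨s, hs⟩ := exists_eq_div_zpow_mul_of_mem_map_conj hm hn (hx p)
  exact ⟨s, by rwa [zpow_neg, zpow_natCast, ← inv_pow, inv_div] at hs⟩

theorem iInf_map_conj_τ_zpow_eq_bot (hm : m ≠ 0) (hn : n ≠ 0) (h : ¬ m ∣ n) :
    ⨅ p : ℕ, (Subgroup.zpowers (b m n ^ m)).map
      (MulAut.conj (τ m n ^ (p : ℤ))).toMonoidHom = ⊥ := by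
  refine (Subgroup.eq_bot_iff_forall _).2 fun x hx => ?_
  rw [Subgroup.mem_iInf] at hx
  obtain ⟨k, rfl⟩ := Subgroup.mem_zpowers_iff.1 (by simpa using hx 0)
  suffices k = 0 by rw [this, zpow_zero]
  refine Int.eq_zero_of_forall_exists_eq_div_pow_mul hn h fun p => ?_
  obtain ⟨s, hs⟩ := exists_eq_div_zpow_mul_of_mem_map_conj hm hn (hx p)
  exact ⟨s, by rwa [zpow_natCast] at hs⟩

end BS

theorem statement15 (m n : ℤ) (hm : m ≠ 0) (hn : n ≠ 0) :
    (let H : Subgroup (BS m n) := Subgroup.zpowers ((BS.b m n) ^ m)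
     let Kplus : Subgroup (BS m n) :=
       ⨅ p : ℕ, H.map (MulAut.conj ((BS.τ m n) ^ (-(p : ℤ)))).toMonoidHom
     let Kminus : Subgroup (BS m n) :=
       ⨅ p : ℕ, H.map (MulAut.conj ((BS.τ m n) ^ (p : ℤ))).toMonoidHom
     (m.natAbs = n.natAbs → Kplus = H ∧ Kminus = H) ∧
     ((∃ a : ℤ, 2 ≤ a ∧ (n = a * m ∨ n = -(a * m))) → Kplus = ⊥ ∧ Kminus = H) ∧
     ((∃ a : ℤ, 2 ≤ a ∧ (m = a * n ∨ m = -(a * n))) → Kplus = H ∧ Kminus = ⊥) ∧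
     (¬ m.natAbs = n.natAbs →
      ¬ (∃ a : ℤ, 2 ≤ a ∧ (n = a * m ∨ n = -(a * m))) →
      ¬ (∃ a : ℤ, 2 ≤ a ∧ (m = a * n ∨ m = -(a * n))) →
      Kplus = ⊥ ∧ Kminus = ⊥)) := by
  intro H Kplus Kminus
  have hmn := Int.exists_two_le_eq_mul_or_eq_neg_mul_iff hm hn
  have hnm := Int.exists_two_le_eq_mul_or_eq_neg_mul_iff hn hm
  refine ⟨fun habs => ?_, fun hgt => ?_, fun hlt => ?_, fun habs hgt hlt => ?_⟩
  · exact ⟨BS.iInf_map_conj_τ_zpow_neg_eq_self (Int.natAbs_dvd_natAbs.1 (habs ▸ dvd_rfl)),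
      BS.iInf_map_conj_τ_zpow_eq_self (Int.natAbs_dvd_natAbs.1 (habs ▸ dvd_rfl))⟩
  · obtain ⟨hdvd, hndvd⟩ := hmn.1 hgt
    exact ⟨BS.iInf_map_conj_τ_zpow_neg_eq_bot hm hn hndvd, BS.iInf_map_conj_τ_zpow_eq_self hdvd⟩
  · obtain ⟨hdvd, hndvd⟩ := hnm.1 hlt
    exact ⟨BS.iInf_map_conj_τ_zpow_neg_eq_self hdvd, BS.iInf_map_conj_τ_zpow_eq_bot hm hn hndvd⟩
  · have hn_ndvd : ¬ n ∣ m := fun h => (em (m ∣ n)).elim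
      (fun h' => habs (Int.natAbs_eq_of_dvd_dvd h' h)) (fun h' => hlt (hnm.2 ⟨h, h'⟩))
    have hm_ndvd : ¬ m ∣ n := fun h => (em (n ∣ m)).elim
      (fun h' => habs (Int.natAbs_eq_of_dvd_dvd h h')) (fun h' => hgt (hmn.2 ⟨h, h'⟩))
    exact ⟨BS.iInf_map_conj_τ_zpow_neg_eq_bot hm hn hn_ndvd,
      BS.iInf_map_conj_τ_zpow_eq_bot hm hn hm_ndvd⟩
end

section
/- Let Γ be a group acting by homeomorphisms on a Hausdorff topological space Ω. Assume that the action of Γ on Ω is strongly hyperbolic and that the action of Γ on L_Γ is strongly faithful. Then every nonempty Γ-invariant closed subset of Ω contains the closure of L_Γ. -/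
open Filter Set

/-!
A closed invariant set `C` cannot be a single point, since a point fixed by all of `Γ` would be
a common fixed point of the two transverse hyperbolic elements. So for a sink `ω` of `γ` with
source `α`, `C` contains some `x ≠ α`; as `n → ∞` the points `γ ^ n • x ∈ C` enter every
neighbourhood of `ω`, and `C` is closed.
-/

section SinkDynamics

variable {Γ : Type*} [Group Γ] {Ω : Type*} [TopologicalSpace Ω] [MulAction Γ Ω]

theorem StronglyHypHomeoAction.exists_mem_ne (hsh : StronglyHypHomeoAction Γ Ω) {C : Set Ω}
    (hne : C.Nonempty) (hinv : ∀ γ : Γ, ∀ x ∈ C, γ • x ∈ C) (α : Ω) : ∃ x ∈ C, x ≠ α := by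
  by_contra! hC
  obtain ⟨x, hx⟩ := hne
  have hαC : α ∈ C := hC x hx ▸ hx
  obtain ⟨γ, δ, -, -, htransverse⟩ := hsh
  exact htransverse ⟨α, hC _ (hinv γ α hαC), hC _ (hinv δ α hαC)⟩

theorem IsSinkOf.mem_of_isClosed [T1Space Ω] {γ : Γ} {ω : Ω} (hω : IsSinkOf γ ω) {C : Set Ω}
    (hC : IsClosed C) (hinv : MapsTo (γ • ·) C C) (hfar : ∀ α, ∃ x ∈ C, x ≠ α) : ω ∈ C := by
  obtain ⟨α, -, -, hdyn⟩ := hω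
  obtain ⟨x, hxC, hxα⟩ := hfar α
  by_contra hωC
  have hU : {x}ᶜ ∈ nhds α := isOpen_compl_singleton.mem_nhds hxα.symm
  obtain ⟨n, hn, -⟩ := (hdyn _ hU _ (hC.isOpen_compl.mem_nhds hωC)).exists
  have hpow : γ ^ n • x ∈ C := smul_iterate_apply γ n x ▸ hinv.iterate n hxC
  exact hn x (not_not_intro rfl) hpow

end SinkDynamics

theorem statement17_general {Γ : Type*} [Group Γ] {Ω : Type*} [TopologicalSpace Ω] [T2Space Ω]
    [MulAction Γ Ω]
    (hsh : StronglyHypHomeoAction Γ Ω) :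
    ∀ C : Set Ω, C.Nonempty → IsClosed C → (∀ γ : Γ, ∀ x ∈ C, γ • x ∈ C) →
      closure (sinkSet Ω (⊤ : Subgroup Γ)) ⊆ C := by
  intro C hne hC hinv
  refine closure_minimal ?_ hC
  rintro ω ⟨γ, -, hω⟩
  exact hω.mem_of_isClosed hC (hinv γ) (hsh.exists_mem_ne hne hinv)

theorem statement17 {Γ : Type*} [Group Γ] {Ω : Type*} [TopologicalSpace Ω] [T2Space Ω]
    [MulAction Γ Ω] (hcont : ActsByHomeos Γ Ω)
    (hsh : StronglyHypHomeoAction Γ Ω)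
    (hfaith : StronglyFaithfulOn Γ (sinkSet Ω (⊤ : Subgroup Γ))) :
    ∀ C : Set Ω, C.Nonempty → IsClosed C → (∀ γ : Γ, ∀ x ∈ C, γ • x ∈ C) →
      closure (sinkSet Ω (⊤ : Subgroup Γ)) ⊆ C :=
  statement17_general hsh
end
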